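/- arXiv:math/0701429 — 5 statements merged into one kernel-verified Lean document; each statement's English description precedes it below -/
import Mathlib

section
/- Let b be a collection of marginal tables with deg b = 2. If n and n′ are two distinct tables in the fiber F_b, then their supports are disjoint: {i ∈ I : n(i) > 0} ∩ {i ∈ I : n′(i) > 0} = ∅. -/
/-!
A table of sample size two that charges the cell `i` is `δᵢ + δⱼ` for some cell `j`. If two
tables `δᵢ + δⱼ` and `δᵢ + δₖ` lie in the same fiber, cancelling `δᵢ` shows that `δⱼ` and `δₖ`
have the same marginals; as the generating class covers every variable, these marginals
determine the cell, so `j = k` and the two tables coincide.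
-/

open Finset

variable {m : ℕ}

/-- The set of cells of an `m`-way contingency table with `I δ` levels for variable `δ`. -/
abbrev Cell (I : Fin m → ℕ) := ∀ δ : Fin m, Fin (I δ)

/-- Marginal cells for a subset `D` of the variables. -/
abbrev PCell (I : Fin m → ℕ) (D : Finset (Fin m)) := ∀ δ : {x // x ∈ D}, Fin (I δ.1)

/-- Restriction of a cell to the variables in `D`. -/
def restrictC (I : Fin m → ℕ) (D : Finset (Fin m)) (i : Cell I) : PCell I D :=
  fun δ => i δ.1

/-- The `D`-marginal of a contingency table `n`. -/
def margin (I : Fin m → ℕ) (n : Cell I → ℕ) (D : Finset (Fin m)) (f : PCell I D) : ℕ :=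
  ∑ i : Cell I, if restrictC I D i = f then n i else 0

/-- The fiber of `b = A n₀`, i.e. all tables sharing all `D`-marginals, `D ∈ 𝒟`, with `n₀`. -/
def fiber (I : Fin m → ℕ) (𝒟 : Finset (Finset (Fin m))) (n₀ : Cell I → ℕ) :
    Set (Cell I → ℕ) :=
  {n | ∀ D ∈ 𝒟, ∀ f : PCell I D, margin I n D f = margin I n₀ D f}

/-- Sample size (total frequency) of a table. -/
def total (I : Fin m → ℕ) (n : Cell I → ℕ) : ℕ := ∑ i : Cell I, n i

theorem Fintype.exists_eq_single_of_sum_eq_one {α : Type*} [Fintype α] [DecidableEq α]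
    {n : α → ℕ} (h : ∑ a, n a = 1) : ∃ j, n = Pi.single j 1 := by
  obtain ⟨j, hj⟩ := (Finsupp.sum_eq_one_iff (Finsupp.equivFunOnFinite.symm n)).mp
    (by rwa [Finsupp.sum_fintype _ _ (fun _ => rfl)])
  exact ⟨j, by simpa [Finsupp.single_eq_pi_single] using congrArg DFunLike.coe hj⟩

theorem Fintype.exists_eq_single_add_single_of_sum_eq_two {α : Type*} [Fintype α]
    [DecidableEq α] {n : α → ℕ} (h : ∑ a, n a = 2) {i : α} (hi : 0 < n i) :
    ∃ j, n = Pi.single i 1 + Pi.single j 1 := by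
  have hle : Pi.single i 1 ≤ n := fun a => by
    rcases eq_or_ne a i with rfl | ha
    · simpa [Nat.one_le_iff_ne_zero, pos_iff_ne_zero] using hi
    · simp [ha]
  obtain ⟨j, hj⟩ := exists_eq_single_of_sum_eq_one (n := n - Pi.single i 1) (by
    simp only [Pi.sub_apply]
    rw [Finset.sum_tsub_distrib _ (fun a _ => hle a), h]
    simp)
  exact ⟨j, by rw [← hj, add_tsub_cancel_of_le hle]⟩

section Margin

variable (I : Fin m → ℕ) (D : Finset (Fin m))

theorem margin_add (n n' : Cell I → ℕ) (f : PCell I D) :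
    margin I (n + n') D f = margin I n D f + margin I n' D f := by
  simp only [margin, Pi.add_apply, ite_add_zero, Finset.sum_add_distrib]

theorem margin_single (j : Cell I) (f : PCell I D) :
    margin I (Pi.single j 1) D f = if restrictC I D j = f then 1 else 0 := by
  rw [margin, Finset.sum_eq_single_of_mem j (Finset.mem_univ _) fun x _ hx => by simp [hx]]
  simp

end Margin

theorem eq_of_restrictC_eq {I : Fin m → ℕ} {𝒟 : Finset (Finset (Fin m))}
    (hcov : ∀ δ : Fin m, ∃ D ∈ 𝒟, δ ∈ D) {j k : Cell I}
    (h : ∀ D ∈ 𝒟, restrictC I D j = restrictC I D k) : j = k := by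
  funext δ
  obtain ⟨D, hD, hδD⟩ := hcov δ
  exact congrFun (h D hD) ⟨δ, hδD⟩

theorem eq_of_margin_single_eq {I : Fin m → ℕ} {𝒟 : Finset (Finset (Fin m))}
    (hcov : ∀ δ : Fin m, ∃ D ∈ 𝒟, δ ∈ D) {j k : Cell I}
    (h : ∀ D ∈ 𝒟, ∀ f, margin I (Pi.single j 1) D f = margin I (Pi.single k 1) D f) :
    j = k := by
  refine eq_of_restrictC_eq hcov fun D hD => ?_
  have := h D hD (restrictC I D j)
  rw [margin_single, margin_single, if_pos rfl] at this
  split_ifs at this with hk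
  exact hk.symm

theorem statement0_general (I : Fin m → ℕ)
    (𝒟 : Finset (Finset (Fin m))) (hcov : ∀ δ : Fin m, ∃ D ∈ 𝒟, δ ∈ D)
    (n₀ : Cell I → ℕ)
    (hdeg : ∀ n ∈ fiber I 𝒟 n₀, total I n = 2)
    (n n' : Cell I → ℕ) (hn : n ∈ fiber I 𝒟 n₀) (hn' : n' ∈ fiber I 𝒟 n₀)
    (hne : n ≠ n') :
    {i : Cell I | 0 < n i} ∩ {i : Cell I | 0 < n' i} = ∅ := by
  refine Set.eq_empty_of_forall_notMem fun i ⟨hi, hi'⟩ => hne ?_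
  obtain ⟨j, rfl⟩ := Fintype.exists_eq_single_add_single_of_sum_eq_two (hdeg n hn) hi
  obtain ⟨k, rfl⟩ := Fintype.exists_eq_single_add_single_of_sum_eq_two (hdeg n' hn') hi'
  suffices j = k by rw [this]
  refine eq_of_margin_single_eq hcov fun D hD f => ?_
  have := (hn D hD f).trans (hn' D hD f).symm
  rwa [margin_add, margin_add, Nat.add_left_cancel_iff] at this

/-- two distinct tables of a degree two fiber have disjoint supports. -/
theorem statement0 (I : Fin m → ℕ) (hI : ∀ δ, 2 ≤ I δ)
    (𝒟 : Finset (Finset (Fin m))) (hcov : ∀ δ : Fin m, ∃ D ∈ 𝒟, δ ∈ D)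
    (n₀ : Cell I → ℕ)
    (hdeg : ∀ n ∈ fiber I 𝒟 n₀, total I n = 2)
    (n n' : Cell I → ℕ) (hn : n ∈ fiber I 𝒟 n₀) (hn' : n' ∈ fiber I 𝒟 n₀)
    (hne : n ≠ n') :
    {i : Cell I | 0 < n i} ∩ {i : Cell I | 0 < n' i} = ∅ :=
  statement0_general I 𝒟 hcov n₀ hdeg n n' hn hn' hne
end

section
/- (Lemma 1) Let b satisfy deg b = 2 and F_b ≠ ∅, and let Γ be a subset of the vertex set of a single connected component of the induced subgraph G(Δ̄_b). Then the Γ-marginal is uniquely determined by b: all tables n ∈ F_b have the same Γ-marginal n_Γ. -/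
open Finset

variable {m : ℕ}

/-- The one-dimensional marginal of `n` for variable `δ` at level `v`. -/
def margin1 (I : Fin m → ℕ) (n : Cell I → ℕ) (δ : Fin m) (v : Fin (I δ)) : ℕ :=
  ∑ i : Cell I, if i δ = v then n i else 0

/-- For a degree two fiber represented by `n₀`, variable `δ` is degenerate if a single
level has one-dimensional marginal `2`. -/
def Degenerate (I : Fin m → ℕ) (n₀ : Cell I → ℕ) (δ : Fin m) : Prop :=
  ∃ v : Fin (I δ), margin1 I n₀ δ v = 2

/-- Variable `δ` is non-degenerate if two distinct levels each have one-dimensional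
marginal `1`. -/
def Nondegenerate (I : Fin m → ℕ) (n₀ : Cell I → ℕ) (δ : Fin m) : Prop :=
  ∃ v w : Fin (I δ), v ≠ w ∧ margin1 I n₀ δ v = 1 ∧ margin1 I n₀ δ w = 1

/-- The independence graph of a generating class `𝒟`: an edge between two distinct
variables iff some `D ∈ 𝒟` contains both. -/
def indepGraph (𝒟 : Finset (Finset (Fin m))) : SimpleGraph (Fin m) :=
  SimpleGraph.fromRel (fun a b => ∃ D ∈ 𝒟, a ∈ D ∧ b ∈ D)

/-- The set of non-degenerate variables `Δ̄_b`. -/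
def ndSet (I : Fin m → ℕ) (n₀ : Cell I → ℕ) : Set (Fin m) :=
  {δ | Nondegenerate I n₀ δ}

/-!
A table of sample size two is the indicator of an unordered pair of cells `{x, y}`, and each of
its marginals is the image of that pair. So two tables `{x, y}` and `{x', y'}` in the fiber have
the same restrictions to every `D ∈ 𝒟`, as unordered pairs. At a non-degenerate variable `δ` the
two levels `x' δ` and `y' δ` differ, so on a generator `D` joining two non-degenerate variables
either `x` agrees with `x'` at both of them or with `y'` at both. Along paths in `G(Δ̄_b)` the
matching `x ↔ x'` or `x ↔ y'` therefore never switches, and on a connected `Γ` it is one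
matching throughout, which makes the two `Γ`-marginals equal.
-/

namespace Multiset

variable {α β : Type*}

theorem pair_eq_pair_iff {a b c d : α} :
    ({a, b} : Multiset α) = {c, d} ↔ a = c ∧ b = d ∨ a = d ∧ b = c := by
  change (([a, b] : List α) : Multiset α) = ([c, d] : List α) ↔ _
  rw [coe_eq_coe, List.perm_pair]
  simp

theorem sum_ite_count_eq_count_map [Fintype α] [DecidableEq α] [DecidableEq β]
    (s : Multiset α) (g : α → β) (b : β) :
    ∑ i, (if g i = b then s.count i else 0) = (s.map g).count b := by
  induction s using Multiset.induction_on with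
  | empty => simp
  | cons a s ih =>
    simp only [count_cons, map_cons, ← ih, ite_add_zero, Finset.sum_add_distrib, add_right_inj]
    rw [Finset.sum_eq_single a (fun i _ hi => by simp [hi]) (by simp)]
    simp [eq_comm]

theorem exists_eq_count_pair_of_sum_eq_two [Fintype α] [DecidableEq α] {n : α → ℕ}
    (h : ∑ i, n i = 2) : ∃ x y, n = fun i => count i {x, y} := by
  set s : Multiset α := ∑ i, n i • {i}
  have hcount : ∀ i, s.count i = n i := fun i => by
    simp [s, count_sum', count_singleton]
  have hcard : card s = 2 := by
    simp [s, h]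
  obtain ⟨x, y, hs⟩ := card_eq_two.mp hcard
  exact ⟨x, y, funext fun i => by rw [← hs, hcount]⟩

end Multiset

theorem SimpleGraph.Reachable.iff_of_forall_adj {V : Type*} {G : SimpleGraph V} {P : V → Prop}
    (hP : ∀ u v, G.Adj u v → (P u ↔ P v)) {a b : V} (h : G.Reachable a b) : P a ↔ P b := by
  obtain ⟨w⟩ := h
  induction w with
  | nil => rfl
  | cons huv _ ih => exact (hP _ _ huv).trans ih

section PairTables

variable {I : Fin m → ℕ} {𝒟 : Finset (Finset (Fin m))} {x y x' y' x₀ y₀ : Cell I}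

def pairTable (x y : Cell I) : Cell I → ℕ := fun i => Multiset.count i {x, y}

theorem exists_eq_pairTable_of_total_eq_two {n : Cell I → ℕ} (h : total I n = 2) :
    ∃ x y, n = pairTable x y :=
  Multiset.exists_eq_count_pair_of_sum_eq_two h

theorem margin_pairTable (D : Finset (Fin m)) (f : PCell I D) :
    margin I (pairTable x y) D f = Multiset.count f {restrictC I D x, restrictC I D y} := by
  unfold margin pairTable
  simpa using Multiset.sum_ite_count_eq_count_map ({x, y} : Multiset (Cell I)) (restrictC I D) f

theorem margin1_pairTable (δ : Fin m) (v : Fin (I δ)) :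
    margin1 I (pairTable x y) δ v = Multiset.count v {x δ, y δ} := by
  unfold margin1 pairTable
  simpa using Multiset.sum_ite_count_eq_count_map ({x, y} : Multiset (Cell I)) (· δ) v

theorem apply_ne_of_nondegenerate {δ : Fin m} (h : Nondegenerate I (pairTable x y) δ) :
    x δ ≠ y δ := by
  obtain ⟨v, -, -, hv, -⟩ := h
  intro hxy
  rw [margin1_pairTable, hxy, Multiset.insert_eq_cons, Multiset.count_cons,
    Multiset.count_singleton] at hv
  split_ifs at hv <;> omega

theorem pair_restrictC_eq_of_mem_fiber {n₀ : Cell I → ℕ} (h : pairTable x y ∈ fiber I 𝒟 n₀)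
    (h' : pairTable x' y' ∈ fiber I 𝒟 n₀) {D : Finset (Fin m)} (hD : D ∈ 𝒟) :
    ({restrictC I D x, restrictC I D y} : Multiset (PCell I D)) =
      {restrictC I D x', restrictC I D y'} :=
  Multiset.ext' fun f => by rw [← margin_pairTable, ← margin_pairTable, h D hD f, h' D hD f]

theorem pair_apply_eq_of_mem_fiber (hcov : ∀ δ : Fin m, ∃ D ∈ 𝒟, δ ∈ D) {n₀ : Cell I → ℕ}
    (h : pairTable x y ∈ fiber I 𝒟 n₀) (h' : pairTable x' y' ∈ fiber I 𝒟 n₀) (δ : Fin m) :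
    ({x δ, y δ} : Multiset (Fin (I δ))) = {x' δ, y' δ} := by
  obtain ⟨D, hD, hδ⟩ := hcov δ
  simpa [restrictC] using congrArg (Multiset.map fun r : PCell I D => r ⟨δ, hδ⟩)
    (pair_restrictC_eq_of_mem_fiber h h' hD)

theorem apply_ne_of_mem_fiber (hcov : ∀ δ : Fin m, ∃ D ∈ 𝒟, δ ∈ D)
    (h : pairTable x y ∈ fiber I 𝒟 (pairTable x₀ y₀)) {δ : Fin m}
    (hδ : δ ∈ ndSet I (pairTable x₀ y₀)) : x δ ≠ y δ := by
  have hne := apply_ne_of_nondegenerate hδ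
  rcases Multiset.pair_eq_pair_iff.mp (pair_apply_eq_of_mem_fiber hcov h (fun _ _ _ => rfl) δ)
    with ⟨hx, hy⟩ | ⟨hx, hy⟩
  · rwa [hx, hy]
  · rw [hx, hy]
    exact hne.symm

theorem apply_eq_iff_of_adj {n₀ : Cell I → ℕ} (h : pairTable x y ∈ fiber I 𝒟 n₀)
    (h' : pairTable x' y' ∈ fiber I 𝒟 n₀) {u v : Fin m} (huv : (indepGraph 𝒟).Adj u v)
    (hu : x' u ≠ y' u) (hv : x' v ≠ y' v) : x u = x' u ↔ x v = x' v := by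
  obtain ⟨D, hD, huD, hvD⟩ : ∃ D ∈ 𝒟, u ∈ D ∧ v ∈ D := by
    rcases ((SimpleGraph.fromRel_adj _ u v).mp huv).2 with ⟨D, hD, h1, h2⟩ | ⟨D, hD, h1, h2⟩
    exacts [⟨D, hD, h1, h2⟩, ⟨D, hD, h2, h1⟩]
  rcases Multiset.pair_eq_pair_iff.mp (pair_restrictC_eq_of_mem_fiber h h' hD)
    with ⟨hx, -⟩ | ⟨hx, -⟩
  · exact iff_of_true (congrFun hx ⟨u, huD⟩) (congrFun hx ⟨v, hvD⟩)
  · exact iff_of_false (fun e => hu (e.symm.trans (congrFun hx ⟨u, huD⟩)))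
      (fun e => hv (e.symm.trans (congrFun hx ⟨v, hvD⟩)))

theorem pair_restrictC_eq_of_forall_apply {Γ : Finset (Fin m)}
    (hpt : ∀ δ ∈ Γ, ({x δ, y δ} : Multiset (Fin (I δ))) = {x' δ, y' δ})
    (hcoh : ∀ a ∈ Γ, ∀ b ∈ Γ, x a = x' a → x b = x' b) :
    ({restrictC I Γ x, restrictC I Γ y} : Multiset (PCell I Γ)) =
      {restrictC I Γ x', restrictC I Γ y'} := by
  rw [Multiset.pair_eq_pair_iff]
  by_cases hal : ∃ a ∈ Γ, x a = x' a
  · obtain ⟨a, ha, hxa⟩ := hal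
    refine Or.inl ⟨funext fun δ => hcoh a ha δ δ.2 hxa, funext fun δ => ?_⟩
    rcases Multiset.pair_eq_pair_iff.mp (hpt δ δ.2) with ⟨-, hy⟩ | ⟨hx, hy⟩
    · exact hy
    · exact hy.trans ((hcoh a ha δ δ.2 hxa).symm.trans hx)
  · push Not at hal
    refine Or.inr ⟨funext fun δ => ?_, funext fun δ => ?_⟩ <;>
      rcases Multiset.pair_eq_pair_iff.mp (hpt δ δ.2) with ⟨hx, -⟩ | ⟨hx, hy⟩
    exacts [absurd hx (hal δ δ.2), hx, absurd hx (hal δ δ.2), hy]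

end PairTables

theorem statement2_general (I : Fin m → ℕ)
    (𝒟 : Finset (Finset (Fin m))) (hcov : ∀ δ : Fin m, ∃ D ∈ 𝒟, δ ∈ D)
    (n₀ : Cell I → ℕ)
    (hdeg : ∀ n ∈ fiber I 𝒟 n₀, total I n = 2)
    (Γ : Finset (Fin m)) (hΓ : ∀ δ ∈ Γ, δ ∈ ndSet I n₀)
    (hconn : ∀ (a : Fin m) (ha : a ∈ Γ) (b : Fin m) (hb : b ∈ Γ),
      ((indepGraph 𝒟).induce (ndSet I n₀)).Reachable ⟨a, hΓ a ha⟩ ⟨b, hΓ b hb⟩) :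
    ∀ n ∈ fiber I 𝒟 n₀, ∀ n' ∈ fiber I 𝒟 n₀,
      ∀ f : PCell I Γ, margin I n Γ f = margin I n' Γ f := by
  obtain ⟨x₀, y₀, rfl⟩ := exists_eq_pairTable_of_total_eq_two (hdeg n₀ fun _ _ _ => rfl)
  intro n hn n' hn' f
  obtain ⟨x, y, rfl⟩ := exists_eq_pairTable_of_total_eq_two (hdeg n hn)
  obtain ⟨x', y', rfl⟩ := exists_eq_pairTable_of_total_eq_two (hdeg n' hn')
  have hcoh : ∀ a ∈ Γ, ∀ b ∈ Γ, x a = x' a → x b = x' b := by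
    intro a ha b hb
    refine ((hconn a ha b hb).iff_of_forall_adj
      (P := fun u : ndSet I (pairTable x₀ y₀) => x u = x' u) fun u v huv => ?_).mp
    exact apply_eq_iff_of_adj hn hn' huv (apply_ne_of_mem_fiber hcov hn' u.2)
      (apply_ne_of_mem_fiber hcov hn' v.2)
  rw [margin_pairTable, margin_pairTable, pair_restrictC_eq_of_forall_apply
    (fun δ _ => pair_apply_eq_of_mem_fiber hcov hn hn' δ) hcoh]

/-- Lemma 1: if `Γ` is a subset of a single connected component of the
induced subgraph `G(Δ̄_b)`, then the `Γ`-marginal is uniquely determined by `b`. -/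
theorem statement2 (I : Fin m → ℕ) (hI : ∀ δ, 2 ≤ I δ)
    (𝒟 : Finset (Finset (Fin m))) (hcov : ∀ δ : Fin m, ∃ D ∈ 𝒟, δ ∈ D)
    (n₀ : Cell I → ℕ)
    (hdeg : ∀ n ∈ fiber I 𝒟 n₀, total I n = 2)
    (Γ : Finset (Fin m)) (hΓ : ∀ δ ∈ Γ, δ ∈ ndSet I n₀)
    (hconn : ∀ (a : Fin m) (ha : a ∈ Γ) (b : Fin m) (hb : b ∈ Γ),
      ((indepGraph 𝒟).induce (ndSet I n₀)).Reachable ⟨a, hΓ a ha⟩ ⟨b, hΓ b hb⟩) :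
    ∀ n ∈ fiber I 𝒟 n₀, ∀ n' ∈ fiber I 𝒟 n₀,
      ∀ f : PCell I Γ, margin I n Γ f = margin I n' Γ f :=
  statement2_general I 𝒟 hcov n₀ hdeg Γ hΓ hconn
end

section
/- (Theorem 2) Let D be the generating class of a hierarchical model with m ≥ 3 variables, and suppose there exist three distinct variables δ_1, δ_2, δ_3 ∈ Δ that are pairwise non-adjacent in the independence graph G^D (i.e., no D ∈ D contains two of them). Then minimal Markov bases for the hierarchical model with generating class D are not unique: there exist two distinct minimal Markov bases. -/
open Finset

variable {m : ℕ}

/-- The `D`-marginal of an integer array. -/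
def marginZ (I : Fin m → ℕ) (z : Cell I → ℤ) (D : Finset (Fin m)) (f : PCell I D) : ℤ :=
  ∑ i : Cell I, if restrictC I D i = f then z i else 0

/-- A move: an integer array all of whose `D`-marginals, `D ∈ 𝒟`, vanish. -/
def IsMove (I : Fin m → ℕ) (𝒟 : Finset (Finset (Fin m))) (z : Cell I → ℤ) : Prop :=
  ∀ D ∈ 𝒟, ∀ f : PCell I D, marginZ I z D f = 0

/-- A table viewed as an integer array. -/
def tblZ (I : Fin m → ℕ) (n : Cell I → ℕ) : Cell I → ℤ := fun i => (n i : ℤ)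

/-- One step of the Markov chain: move inside `F` by adding or subtracting a move of `M`. -/
def MStep (I : Fin m → ℕ) (M : Set (Cell I → ℤ)) (F : Set (Cell I → ℕ))
    (n n' : Cell I → ℕ) : Prop :=
  n' ∈ F ∧ (tblZ I n' - tblZ I n ∈ M ∨ tblZ I n - tblZ I n' ∈ M)

/-- The set of moves `M` connects the set of tables `F` (all states of `F` are mutually
accessible by moves from `M` staying inside `F`). -/
def Connects (I : Fin m → ℕ) (M : Set (Cell I → ℤ)) (F : Set (Cell I → ℕ)) : Prop :=
  ∀ n ∈ F, ∀ n' ∈ F, Relation.ReflTransGen (MStep I M F) n n'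

/-- A Markov basis: a finite set of moves connecting every fiber. -/
def IsMarkovBasis (I : Fin m → ℕ) (𝒟 : Finset (Finset (Fin m)))
    (M : Set (Cell I → ℤ)) : Prop :=
  M.Finite ∧ (∀ z ∈ M, IsMove I 𝒟 z) ∧
    ∀ n₀ : Cell I → ℕ, Connects I M (fiber I 𝒟 n₀)

/-- A minimal Markov basis: no proper subset is a Markov basis. -/
def IsMinimalMarkovBasis (I : Fin m → ℕ) (𝒟 : Finset (Finset (Fin m)))
    (M : Set (Cell I → ℤ)) : Prop :=
  IsMarkovBasis I 𝒟 M ∧ ∀ M' ⊂ M, ¬ IsMarkovBasis I 𝒟 M'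

/-- Two sets of moves are equal up to identifying each move `z` with `-z`. -/
def EqUpToSign (I : Fin m → ℕ) (M M' : Set (Cell I → ℤ)) : Prop :=
  (∀ z ∈ M, z ∈ M' ∨ -z ∈ M') ∧ (∀ z ∈ M', z ∈ M ∨ -z ∈ M)

namespace S5

variable {m : ℕ}

/-! ### Generic margin lemmas -/

lemma margin_add (I : Fin m → ℕ) (n n' : Cell I → ℕ) (D : Finset (Fin m)) (f : PCell I D) :
    margin I (fun i => n i + n' i) D f = margin I n D f + margin I n' D f := by
  unfold margin
  rw [← Finset.sum_add_distrib]
  exact Finset.sum_congr rfl fun i _ => by split <;> simp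

lemma marginZ_add (I : Fin m → ℕ) (x y : Cell I → ℤ) (D : Finset (Fin m)) (f : PCell I D) :
    marginZ I (x + y) D f = marginZ I x D f + marginZ I y D f := by
  unfold marginZ
  rw [← Finset.sum_add_distrib]
  exact Finset.sum_congr rfl fun i _ => by by_cases h : restrictC I D i = f <;> simp [h]

lemma marginZ_sub (I : Fin m → ℕ) (x y : Cell I → ℤ) (D : Finset (Fin m)) (f : PCell I D) :
    marginZ I (x - y) D f = marginZ I x D f - marginZ I y D f := by
  unfold marginZ
  rw [← Finset.sum_sub_distrib]
  exact Finset.sum_congr rfl fun i _ => by by_cases h : restrictC I D i = f <;> simp [h]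

lemma marginZ_tblZ (I : Fin m → ℕ) (n : Cell I → ℕ) (D : Finset (Fin m)) (f : PCell I D) :
    marginZ I (tblZ I n) D f = (margin I n D f : ℤ) := by
  unfold marginZ margin tblZ
  rw [Nat.cast_sum]
  exact Finset.sum_congr rfl fun i _ => by by_cases h : restrictC I D i = f <;> simp [h]

/-- indicator table -/
def ind (I : Fin m → ℕ) (u : Cell I) : Cell I → ℕ := fun i => if i = u then 1 else 0

lemma margin_ind (I : Fin m → ℕ) (u : Cell I) (D : Finset (Fin m)) (f : PCell I D) :
    margin I (ind I u) D f = if restrictC I D u = f then 1 else 0 := by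
  unfold margin ind
  rw [Finset.sum_eq_single u]
  · simp
  · intro b _ hb; simp [hb]
  · intro h; exact absurd (Finset.mem_univ u) h

lemma margin1_add (I : Fin m → ℕ) (n n' : Cell I → ℕ) (δ : Fin m) (v : Fin (I δ)) :
    margin1 I (fun i => n i + n' i) δ v = margin1 I n δ v + margin1 I n' δ v := by
  unfold margin1
  rw [← Finset.sum_add_distrib]
  exact Finset.sum_congr rfl fun i _ => by split <;> simp

lemma margin1_ind (I : Fin m → ℕ) (u : Cell I) (δ : Fin m) (v : Fin (I δ)) :
    margin1 I (ind I u) δ v = if u δ = v then 1 else 0 := by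
  unfold margin1 ind
  rw [Finset.sum_eq_single u]
  · simp
  · intro b _ hb; simp [hb]
  · intro h; exact absurd (Finset.mem_univ u) h

lemma total_add (I : Fin m → ℕ) (n n' : Cell I → ℕ) :
    total I (fun i => n i + n' i) = total I n + total I n' := by
  unfold total; rw [← Finset.sum_add_distrib]

lemma total_ind (I : Fin m → ℕ) (u : Cell I) : total I (ind I u) = 1 := by
  unfold total ind; simp

lemma total_eq_sum_margin (I : Fin m → ℕ) (n : Cell I → ℕ) (D : Finset (Fin m)) :
    total I n = ∑ f : PCell I D, margin I n D f := by
  unfold total margin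
  rw [Finset.sum_comm]
  refine Finset.sum_congr rfl fun i _ => ?_
  rw [Finset.sum_ite_eq Finset.univ (restrictC I D i) (fun _ => n i)]
  simp

lemma margin1_eq_sum (I : Fin m → ℕ) (n : Cell I → ℕ) (D : Finset (Fin m)) (δ : Fin m)
    (hδ : δ ∈ D) (v : Fin (I δ)) :
    margin1 I n δ v
      = ∑ f : PCell I D, if f ⟨δ, hδ⟩ = v then margin I n D f else 0 := by
  symm
  calc ∑ f : PCell I D, (if f ⟨δ, hδ⟩ = v then margin I n D f else 0)
      = ∑ f : PCell I D, ∑ i : Cell I,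
          (if restrictC I D i = f ∧ f ⟨δ, hδ⟩ = v then n i else 0) := by
        refine Finset.sum_congr rfl fun f _ => ?_
        by_cases hf : f ⟨δ, hδ⟩ = v
        · rw [if_pos hf]
          unfold margin
          exact Finset.sum_congr rfl fun i _ => by
            by_cases h : restrictC I D i = f <;> simp [h, hf]
        · rw [if_neg hf]
          symm
          exact Finset.sum_eq_zero fun i _ => by simp [hf]
    _ = ∑ i : Cell I, ∑ f : PCell I D,
          (if restrictC I D i = f ∧ f ⟨δ, hδ⟩ = v then n i else 0) := Finset.sum_comm
    _ = ∑ i : Cell I, (if i δ = v then n i else 0) := by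
        refine Finset.sum_congr rfl fun i _ => ?_
        rw [Finset.sum_eq_single (restrictC I D i)]
        · have hr : restrictC I D i ⟨δ, hδ⟩ = i δ := rfl
          by_cases h : i δ = v
          · simp [hr, h]
          · simp [hr, h]
        · intro b _ hb
          rw [if_neg]
          exact fun hc => hb hc.1.symm
        · intro h; exact absurd (Finset.mem_univ _) h
    _ = margin1 I n δ v := rfl

lemma total_two (I : Fin m → ℕ) (n : Cell I → ℕ) (h : total I n = 2) :
    ∃ u v : Cell I, n = fun i => ind I u i + ind I v i := by
  have h1 : ∃ u, n u ≠ 0 := by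
    by_contra hc
    push_neg at hc
    rw [total, Finset.sum_eq_zero (fun i _ => hc i)] at h
    omega
  obtain ⟨u, hu⟩ := h1
  refine ⟨u, ?_⟩
  set n' : Cell I → ℕ := fun i => n i - ind I u i with hn'def
  have hdec : n = fun i => ind I u i + n' i := by
    funext i
    simp only [hn'def]
    by_cases hi : i = u
    · rw [show ind I u i = 1 from by simp [ind, hi]]
      have hne : n i ≠ 0 := by rw [hi]; exact hu
      omega
    · rw [show ind I u i = 0 from by simp [ind, hi]]
      omega
  have htot' : total I n' = 1 := by
    have h2 := total_add I (ind I u) n'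
    rw [← hdec, total_ind] at h2
    omega
  have h2 : ∃ v, n' v ≠ 0 := by
    by_contra hc
    push_neg at hc
    rw [total, Finset.sum_eq_zero (fun i _ => hc i)] at htot'
    omega
  obtain ⟨v, hv⟩ := h2
  refine ⟨v, ?_⟩
  have hvle : n' v ≤ total I n' :=
    Finset.single_le_sum (f := n') (fun i _ => Nat.zero_le _) (Finset.mem_univ v)
  have hn'v : n' v = 1 := by omega
  have hind : n' = ind I v := by
    funext i
    by_cases hi : i = v
    · subst hi; simp [ind, hn'v]
    · have hpair : n' i + n' v ≤ total I n' := by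
        rw [total, ← Finset.sum_pair hi]
        exact Finset.sum_le_sum_of_subset (Finset.subset_univ _)
      simp only [ind, if_neg hi]
      omega
  rw [hind] at hdec
  exact hdec

/-! ### Graver basis : existence of a Markov basis -/

/-- conformal order -/
def Conf (I : Fin m → ℕ) (g z : Cell I → ℤ) : Prop :=
  ∀ i, (0 ≤ g i ∧ g i ≤ z i) ∨ (z i ≤ g i ∧ g i ≤ 0)

lemma Conf.refl (I : Fin m → ℕ) (z : Cell I → ℤ) : Conf I z z := fun i => by
  rcases le_or_gt 0 (z i) with h | h
  · exact Or.inl ⟨h, le_refl _⟩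
  · exact Or.inr ⟨le_refl _, h.le⟩

lemma Conf.trans {I : Fin m → ℕ} {x y z : Cell I → ℤ} (h1 : Conf I x y) (h2 : Conf I y z) :
    Conf I x z := fun i => by rcases h1 i with h | h <;> rcases h2 i with h' | h' <;> omega

def Graver (I : Fin m → ℕ) (𝒟 : Finset (Finset (Fin m))) : Set (Cell I → ℤ) :=
  {g | IsMove I 𝒟 g ∧ g ≠ 0 ∧
    ∀ h : Cell I → ℤ, IsMove I 𝒟 h → h ≠ 0 → Conf I h g → h = g}

lemma graver_finite (I : Fin m → ℕ) (𝒟 : Finset (Finset (Fin m))) :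
    (Graver I 𝒟).Finite := by
  classical
  set φ : (Cell I → ℤ) → ((Cell I ⊕ Cell I) → ℕ) :=
    fun z => Sum.elim (fun i => (z i).toNat) (fun i => (-z i).toNat) with hφdef
  have hinj : Set.InjOn φ (Graver I 𝒟) := by
    intro x _ y _ hxy
    funext i
    have h1 := congrFun hxy (Sum.inl i)
    have h2 := congrFun hxy (Sum.inr i)
    simp only [hφdef, Sum.elim_inl, Sum.elim_inr] at h1 h2
    omega
  have hanti : ∀ x ∈ Graver I 𝒟, ∀ y ∈ Graver I 𝒟, φ x ≤ φ y → x = y := by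
    intro x hx y hy hle
    refine hy.2.2 x hx.1 hx.2.1 ?_
    intro i
    have h1 : φ x (Sum.inl i) ≤ φ y (Sum.inl i) := hle (Sum.inl i)
    have h2 : φ x (Sum.inr i) ≤ φ y (Sum.inr i) := hle (Sum.inr i)
    simp only [hφdef, Sum.elim_inl, Sum.elim_inr] at h1 h2
    omega
  have himg : (φ '' Graver I 𝒟).Finite := by
    have hpwo : ((Finsupp.equivFunOnFinite.symm ∘ φ) '' Graver I 𝒟).IsPWO :=
      Set.isPWO_of_wellQuasiOrderedLE _
    have hanti2 : IsAntichain (· ≤ ·) ((Finsupp.equivFunOnFinite.symm ∘ φ) '' Graver I 𝒟) := by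
      rintro _ ⟨x, hx, rfl⟩ _ ⟨y, hy, rfl⟩ hne hle
      refine hne ?_
      have hle' : φ x ≤ φ y := by
        intro a
        have := Finsupp.le_def.mp hle a
        simpa [Finsupp.equivFunOnFinite_symm_coe] using this
      exact congrArg _ (hanti x hx y hy hle')
    have h2 : ((Finsupp.equivFunOnFinite.symm ∘ φ) '' Graver I 𝒟).Finite :=
      hanti2.finite_of_partiallyWellOrderedOn hpwo
    have h3 := h2.image (Finsupp.equivFunOnFinite (α := Cell I ⊕ Cell I) (M := ℕ))
    rw [Set.image_image] at h3
    have hcomp : (fun x => Finsupp.equivFunOnFinite ((Finsupp.equivFunOnFinite.symm ∘ φ) x))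
        = φ := by
      funext x
      simp
    rw [hcomp] at h3
    exact h3
  exact Set.Finite.of_finite_image himg hinj

lemma exists_graver_conf (I : Fin m → ℕ) (𝒟 : Finset (Finset (Fin m))) :
    ∀ (z : Cell I → ℤ), IsMove I 𝒟 z → z ≠ 0 → ∃ g ∈ Graver I 𝒟, Conf I g z := by
  suffices haux : ∀ N : ℕ, ∀ z : Cell I → ℤ, (∑ i : Cell I, (z i).natAbs) ≤ N →
      IsMove I 𝒟 z → z ≠ 0 → ∃ g ∈ Graver I 𝒟, Conf I g z by
    intro z hz h0; exact haux _ z le_rfl hz h0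
  intro N
  induction N with
  | zero =>
    intro z hz hmove h0
    exfalso
    apply h0
    funext i
    have hle : (z i).natAbs ≤ ∑ j : Cell I, (z j).natAbs :=
      Finset.single_le_sum (f := fun j => (z j).natAbs) (fun j _ => Nat.zero_le _)
        (Finset.mem_univ i)
    have : (z i).natAbs = 0 := by omega
    simpa [Int.natAbs_eq_zero] using this
  | succ N ih =>
    intro z hz hmove h0
    by_cases hmin : ∀ h : Cell I → ℤ, IsMove I 𝒟 h → h ≠ 0 → Conf I h z → h = z
    · exact ⟨z, ⟨hmove, h0, hmin⟩, Conf.refl I z⟩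
    · push_neg at hmin
      obtain ⟨h, hhm, hh0, hconf, hne⟩ := hmin
      have hlt : ∑ i : Cell I, (h i).natAbs < ∑ i : Cell I, (z i).natAbs := by
        obtain ⟨j, hj⟩ : ∃ j, h j ≠ z j := by
          by_contra hc; push_neg at hc; exact hne (funext hc)
        refine Finset.sum_lt_sum (fun i _ => ?_) ⟨j, Finset.mem_univ j, ?_⟩
        · rcases hconf i with h' | h' <;> omega
        · rcases hconf j with h' | h' <;> omega
      obtain ⟨g, hg, hgconf⟩ := ih h (by omega) hhm hh0
      exact ⟨g, hg, Conf.trans hgconf hconf⟩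

lemma fiber_diff_isMove (I : Fin m → ℕ) (𝒟 : Finset (Finset (Fin m))) (n₀ : Cell I → ℕ)
    {n n' : Cell I → ℕ} (hn : n ∈ fiber I 𝒟 n₀) (hn' : n' ∈ fiber I 𝒟 n₀) :
    IsMove I 𝒟 (tblZ I n' - tblZ I n) := by
  intro D hD f
  rw [marginZ_sub, marginZ_tblZ, marginZ_tblZ, hn D hD f, hn' D hD f, sub_self]

lemma graver_isMarkovBasis (I : Fin m → ℕ) (𝒟 : Finset (Finset (Fin m))) :
    IsMarkovBasis I 𝒟 (Graver I 𝒟) := by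
  refine ⟨graver_finite I 𝒟, fun z hz => hz.1, ?_⟩
  intro n₀
  suffices haux : ∀ N : ℕ, ∀ n n' : Cell I → ℕ, n ∈ fiber I 𝒟 n₀ → n' ∈ fiber I 𝒟 n₀ →
      (∑ i : Cell I, ((n' i : ℤ) - n i).natAbs) ≤ N →
      Relation.ReflTransGen (MStep I (Graver I 𝒟) (fiber I 𝒟 n₀)) n n' by
    intro n hn n' hn'; exact haux _ n n' hn hn' le_rfl
  intro N
  induction N with
  | zero =>
    intro n n' hn hn' hb
    have : n = n' := by
      funext i
      have hle : ((n' i : ℤ) - n i).natAbs ≤ ∑ j : Cell I, ((n' j : ℤ) - n j).natAbs :=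
        Finset.single_le_sum (f := fun j => ((n' j : ℤ) - n j).natAbs)
          (fun j _ => Nat.zero_le _) (Finset.mem_univ i)
      omega
    rw [this]
  | succ N ih =>
    intro n n' hn hn' hb
    by_cases hzz : tblZ I n' - tblZ I n = 0
    · have : n = n' := by
        funext i
        have := congrFun hzz i
        simp only [Pi.sub_apply, tblZ, Pi.zero_apply] at this
        omega
      rw [this]
    · obtain ⟨g, hg, hconf⟩ :=
        exists_graver_conf I 𝒟 _ (fiber_diff_isMove I 𝒟 n₀ hn hn') hzz
      have hconf' : ∀ i, (0 ≤ g i ∧ g i ≤ (n' i : ℤ) - n i) ∨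
          ((n' i : ℤ) - n i ≤ g i ∧ g i ≤ 0) := by
        intro i
        have := hconf i
        simpa only [Pi.sub_apply, tblZ] using this
      set n'' : Cell I → ℕ := fun i => ((n i : ℤ) + g i).toNat with hn''def
      have hpos : ∀ i, 0 ≤ (n i : ℤ) + g i := by
        intro i
        rcases hconf' i with h | h <;> omega
      have htb : tblZ I n'' = tblZ I n + g := by
        funext i
        simp only [tblZ, hn''def, Pi.add_apply]
        rw [Int.toNat_of_nonneg (hpos i)]
      have hn''F : n'' ∈ fiber I 𝒟 n₀ := by
        intro D hD f
        have hZ : (margin I n'' D f : ℤ) = (margin I n D f : ℤ) := by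
          rw [← marginZ_tblZ, htb, marginZ_add, marginZ_tblZ, hg.1 D hD f, add_zero]
        have hZ2 : margin I n'' D f = margin I n D f := by exact_mod_cast hZ
        rw [hZ2, hn D hD f]
      have hstep : MStep I (Graver I 𝒟) (fiber I 𝒟 n₀) n n'' := by
        refine ⟨hn''F, Or.inl ?_⟩
        rw [htb, add_sub_cancel_left]
        exact hg
      refine Relation.ReflTransGen.head hstep (ih n'' n' hn''F hn' ?_)
      have hn''v : ∀ i, (n'' i : ℤ) = n i + g i := by
        intro i
        have := congrFun htb i
        simpa only [tblZ, Pi.add_apply] using this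
      have hpt : ∀ i, ((n' i : ℤ) - n'' i).natAbs + (g i).natAbs
          = ((n' i : ℤ) - n i).natAbs := by
        intro i
        have h1 := hconf' i
        have h2 := hn''v i
        omega
      have hsum : (∑ i : Cell I, ((n' i : ℤ) - n'' i).natAbs)
          + ∑ i : Cell I, (g i).natAbs
          = ∑ i : Cell I, ((n' i : ℤ) - n i).natAbs := by
        rw [← Finset.sum_add_distrib]
        exact Finset.sum_congr rfl fun i _ => hpt i
      have hgpos : 0 < ∑ i : Cell I, (g i).natAbs := by
        obtain ⟨j, hj⟩ : ∃ j, g j ≠ 0 := by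
          by_contra hc; push_neg at hc
          exact hg.2.1 (funext fun i => by simpa using hc i)
        have hle : (g j).natAbs ≤ ∑ i : Cell I, (g i).natAbs :=
          Finset.single_le_sum (f := fun i => (g i).natAbs)
            (fun i _ => Nat.zero_le _) (Finset.mem_univ j)
        omega
      omega

lemma exists_minimal_subbasis (I : Fin m → ℕ) (𝒟 : Finset (Finset (Fin m)))
    (M : Set (Cell I → ℤ)) (hM : IsMarkovBasis I 𝒟 M) :
    ∃ M' ⊆ M, IsMinimalMarkovBasis I 𝒟 M' := by
  classical
  suffices haux : ∀ k : ℕ, ∀ M : Set (Cell I → ℤ), M.ncard ≤ k → IsMarkovBasis I 𝒟 M →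
      ∃ M' ⊆ M, IsMinimalMarkovBasis I 𝒟 M' from haux M.ncard M le_rfl hM
  intro k
  induction k with
  | zero =>
    intro M hcard hbasis
    refine ⟨M, subset_rfl, hbasis, ?_⟩
    intro M' hM' _
    have hMe : M = ∅ := by
      have := Set.ncard_eq_zero (hs := hbasis.1)
      exact this.mp (by omega)
    rw [hMe, Set.ssubset_def] at hM'
    exact hM'.2 (Set.empty_subset M')
  | succ k ih =>
    intro M hcard hbasis
    by_cases hmin : ∀ M' ⊂ M, ¬ IsMarkovBasis I 𝒟 M'
    · exact ⟨M, subset_rfl, hbasis, hmin⟩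
    · push_neg at hmin
      obtain ⟨M'', hss, hb''⟩ := hmin
      have hlt : M''.ncard < M.ncard := Set.ncard_lt_ncard hss hbasis.1
      obtain ⟨M', hsub, hmin'⟩ := ih M'' (by omega) hb''
      exact ⟨M', hsub.trans hss.subset, hmin'⟩

/-! ### The four tables of the degenerate degree-2 fiber -/

section Cells

variable (I : Fin m → ℕ) (hI : ∀ δ, 2 ≤ I δ) (δ₁ δ₂ δ₃ : Fin m)

def bitc (x : Bool) (δ : Fin m) : Fin (I δ) :=
  ⟨if x then 1 else 0, by have := hI δ; split <;> omega⟩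

def cc (a b c : Bool) : Cell I := fun δ =>
  if δ = δ₁ then bitc I hI a δ else if δ = δ₂ then bitc I hI b δ
  else if δ = δ₃ then bitc I hI c δ else bitc I hI false δ

def tb (a b c : Bool) : Cell I → ℕ :=
  fun i => ind I (cc I hI δ₁ δ₂ δ₃ a b c) i + ind I (cc I hI δ₁ δ₂ δ₃ (!a) (!b) (!c)) i

def flip3 (s : Bool × Bool × Bool) : Bool × Bool × Bool := (!s.1, !s.2.1, !s.2.2)

def tri : Fin 4 → Bool × Bool × Bool :=
  ![(false,false,false),(true,false,false),(false,true,false),(false,false,true)]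

def ccB (s : Bool × Bool × Bool) : Cell I := cc I hI δ₁ δ₂ δ₃ s.1 s.2.1 s.2.2

def tbB (s : Bool × Bool × Bool) : Cell I → ℕ := tb I hI δ₁ δ₂ δ₃ s.1 s.2.1 s.2.2

def tquad (p : Fin 4) : Cell I → ℕ := tbB I hI δ₁ δ₂ δ₃ (tri p)

lemma bitc_inj {x y : Bool} {δ : Fin m} (h : bitc I hI x δ = bitc I hI y δ) : x = y := by
  cases x <;> cases y <;> simp_all [bitc]

lemma cc_inj (h12 : δ₁ ≠ δ₂) (h13 : δ₁ ≠ δ₃) (h23 : δ₂ ≠ δ₃) {a b c a' b' c' : Bool}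
    (h : cc I hI δ₁ δ₂ δ₃ a b c = cc I hI δ₁ δ₂ δ₃ a' b' c') :
    a = a' ∧ b = b' ∧ c = c' := by
  have e1 : bitc I hI a δ₁ = bitc I hI a' δ₁ := by
    simpa [cc] using congrFun h δ₁
  have e2 : bitc I hI b δ₂ = bitc I hI b' δ₂ := by
    simpa [cc, Ne.symm h12] using congrFun h δ₂
  have e3 : bitc I hI c δ₃ = bitc I hI c' δ₃ := by
    simpa [cc, Ne.symm h13, Ne.symm h23] using congrFun h δ₃
  exact ⟨bitc_inj I hI e1, bitc_inj I hI e2, bitc_inj I hI e3⟩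

lemma ccB_inj (h12 : δ₁ ≠ δ₂) (h13 : δ₁ ≠ δ₃) (h23 : δ₂ ≠ δ₃) {s s' : Bool × Bool × Bool}
    (h : ccB I hI δ₁ δ₂ δ₃ s = ccB I hI δ₁ δ₂ δ₃ s') : s = s' := by
  obtain ⟨h1, h2, h3⟩ := cc_inj I hI δ₁ δ₂ δ₃ h12 h13 h23 h
  exact Prod.ext h1 (Prod.ext h2 h3)

lemma tbB_zero (s : Bool × Bool × Bool) (i : Cell I)
    (h1 : i ≠ ccB I hI δ₁ δ₂ δ₃ s) (h2 : i ≠ ccB I hI δ₁ δ₂ δ₃ (flip3 s)) :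
    tbB I hI δ₁ δ₂ δ₃ s i = 0 := by
  simp only [ccB, flip3] at h1 h2
  simp [tbB, tb, ind, ccB, h1, h2]

lemma tbB_self (h12 : δ₁ ≠ δ₂) (h13 : δ₁ ≠ δ₃) (h23 : δ₂ ≠ δ₃)
    (s : Bool × Bool × Bool) (hs : s ≠ flip3 s) :
    tbB I hI δ₁ δ₂ δ₃ s (ccB I hI δ₁ δ₂ δ₃ s) = 1 := by
  have hne : ccB I hI δ₁ δ₂ δ₃ s ≠ ccB I hI δ₁ δ₂ δ₃ (flip3 s) :=
    fun h => hs (ccB_inj I hI δ₁ δ₂ δ₃ h12 h13 h23 h)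
  simp only [ccB, flip3] at hne
  simp [tbB, tb, ind, ccB, hne]

lemma tbB_flip (s : Bool × Bool × Bool) :
    tbB I hI δ₁ δ₂ δ₃ (flip3 s) = tbB I hI δ₁ δ₂ δ₃ s := by
  funext i
  simp only [tbB, tb, flip3, Bool.not_not]
  exact Nat.add_comm _ _

lemma hdist : ∀ p q : Fin 4, p ≠ q →
    tri p ≠ tri q ∧ tri p ≠ flip3 (tri q) ∧ flip3 (tri p) ≠ tri q ∧
      flip3 (tri p) ≠ flip3 (tri q) := by decide

lemma hflip_self : ∀ p : Fin 4, tri p ≠ flip3 (tri p) := by decide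

lemma hcover3 : ∀ s : Bool × Bool × Bool, ∃ p : Fin 4, tri p = s ∨ tri p = flip3 s := by
  decide

lemma t_apply_self (h12 : δ₁ ≠ δ₂) (h13 : δ₁ ≠ δ₃) (h23 : δ₂ ≠ δ₃) (p : Fin 4) :
    tquad I hI δ₁ δ₂ δ₃ p (ccB I hI δ₁ δ₂ δ₃ (tri p)) = 1 :=
  tbB_self I hI δ₁ δ₂ δ₃ h12 h13 h23 _ (hflip_self p)

lemma t_apply_ne (h12 : δ₁ ≠ δ₂) (h13 : δ₁ ≠ δ₃) (h23 : δ₂ ≠ δ₃)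
    (p q : Fin 4) (h : p ≠ q) :
    tquad I hI δ₁ δ₂ δ₃ q (ccB I hI δ₁ δ₂ δ₃ (tri p)) = 0 := by
  refine tbB_zero I hI δ₁ δ₂ δ₃ (tri q) _ ?_ ?_
  · exact fun hc => (hdist q p h.symm).1 (ccB_inj I hI δ₁ δ₂ δ₃ h12 h13 h23 hc).symm
  · exact fun hc => (hdist q p h.symm).2.2.1
      ((ccB_inj I hI δ₁ δ₂ δ₃ h12 h13 h23 hc).symm ▸ rfl)

lemma t_disj (h12 : δ₁ ≠ δ₂) (h13 : δ₁ ≠ δ₃) (h23 : δ₂ ≠ δ₃)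
    (p q : Fin 4) (h : p ≠ q) (i : Cell I) :
    tquad I hI δ₁ δ₂ δ₃ p i = 0 ∨ tquad I hI δ₁ δ₂ δ₃ q i = 0 := by
  by_cases hp0 : tquad I hI δ₁ δ₂ δ₃ p i = 0
  · exact Or.inl hp0
  · right
    have hi : i = ccB I hI δ₁ δ₂ δ₃ (tri p) ∨ i = ccB I hI δ₁ δ₂ δ₃ (flip3 (tri p)) := by
      by_contra hc
      push_neg at hc
      exact hp0 (tbB_zero I hI δ₁ δ₂ δ₃ (tri p) i hc.1 hc.2)
    rcases hi with rfl | rfl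
    · exact t_apply_ne I hI δ₁ δ₂ δ₃ h12 h13 h23 p q h
    · refine tbB_zero I hI δ₁ δ₂ δ₃ (tri q) _ ?_ ?_
      · exact fun hc => (hdist p q h).2.2.1
          ((ccB_inj I hI δ₁ δ₂ δ₃ h12 h13 h23 hc))
      · exact fun hc => (hdist p q h).2.2.2
          ((ccB_inj I hI δ₁ δ₂ δ₃ h12 h13 h23 hc))

lemma not_both (𝒟 : Finset (Finset (Fin m))) {x y : Fin m} {D : Finset (Fin m)}
    (hxy : x ≠ y) (hadj : ¬ (indepGraph 𝒟).Adj x y) (hD : D ∈ 𝒟)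
    (hx : x ∈ D) (hy : y ∈ D) : False := by
  apply hadj
  rw [indepGraph, SimpleGraph.fromRel_adj]
  exact ⟨hxy, Or.inl ⟨D, hD, hx, hy⟩⟩

/-- selector bit for a marginal set -/
def sel (D : Finset (Fin m)) (a b c : Bool) : Bool :=
  if δ₁ ∈ D then a else if δ₂ ∈ D then b else if δ₃ ∈ D then c else false

lemma restrict_cc (h12 : δ₁ ≠ δ₂) (h13 : δ₁ ≠ δ₃) (h23 : δ₂ ≠ δ₃)
    (𝒟 : Finset (Finset (Fin m)))
    (ha12 : ¬ (indepGraph 𝒟).Adj δ₁ δ₂) (ha13 : ¬ (indepGraph 𝒟).Adj δ₁ δ₃)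
    (ha23 : ¬ (indepGraph 𝒟).Adj δ₂ δ₃)
    (D : Finset (Fin m)) (hD : D ∈ 𝒟) (a b c : Bool) :
    restrictC I D (cc I hI δ₁ δ₂ δ₃ a b c)
      = restrictC I D (cc I hI δ₁ δ₂ δ₃ (sel δ₁ δ₂ δ₃ D a b c)
          (sel δ₁ δ₂ δ₃ D a b c) (sel δ₁ δ₂ δ₃ D a b c)) := by
  funext δS
  obtain ⟨δ, hδ⟩ := δS
  show cc I hI δ₁ δ₂ δ₃ a b c δ = cc I hI δ₁ δ₂ δ₃ _ _ _ δ
  by_cases e1 : δ = δ₁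
  · subst e1
    simp [cc, sel, hδ]
  · by_cases e2 : δ = δ₂
    · subst e2
      have h1 : δ₁ ∉ D := fun hc => not_both 𝒟 h12 ha12 hD hc hδ
      simp [cc, sel, e1, h1, hδ]
    · by_cases e3 : δ = δ₃
      · subst e3
        have h1 : δ₁ ∉ D := fun hc => not_both 𝒟 h13 ha13 hD hc hδ
        have h2 : δ₂ ∉ D := fun hc => not_both 𝒟 h23 ha23 hD hc hδ
        simp [cc, sel, e1, e2, h1, h2, hδ]
      · simp [cc, e1, e2, e3]

lemma margin_tb (h12 : δ₁ ≠ δ₂) (h13 : δ₁ ≠ δ₃) (h23 : δ₂ ≠ δ₃)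
    (𝒟 : Finset (Finset (Fin m)))
    (ha12 : ¬ (indepGraph 𝒟).Adj δ₁ δ₂) (ha13 : ¬ (indepGraph 𝒟).Adj δ₁ δ₃)
    (ha23 : ¬ (indepGraph 𝒟).Adj δ₂ δ₃)
    (D : Finset (Fin m)) (hD : D ∈ 𝒟) (f : PCell I D) (a b c : Bool) :
    margin I (tb I hI δ₁ δ₂ δ₃ a b c) D f
      = margin I (tb I hI δ₁ δ₂ δ₃ false false false) D f := by
  have expand : ∀ a b c : Bool,
      margin I (tb I hI δ₁ δ₂ δ₃ a b c) D f
        = (if restrictC I D (cc I hI δ₁ δ₂ δ₃ (sel δ₁ δ₂ δ₃ D a b c)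
              (sel δ₁ δ₂ δ₃ D a b c) (sel δ₁ δ₂ δ₃ D a b c)) = f then 1 else 0)
          + (if restrictC I D (cc I hI δ₁ δ₂ δ₃ (sel δ₁ δ₂ δ₃ D (!a) (!b) (!c))
              (sel δ₁ δ₂ δ₃ D (!a) (!b) (!c)) (sel δ₁ δ₂ δ₃ D (!a) (!b) (!c))) = f
              then 1 else 0) := by
    intro a b c
    show margin I (fun i => ind I (cc I hI δ₁ δ₂ δ₃ a b c) i
        + ind I (cc I hI δ₁ δ₂ δ₃ (!a) (!b) (!c)) i) D f = _
    rw [margin_add, margin_ind, margin_ind,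
      restrict_cc I hI δ₁ δ₂ δ₃ h12 h13 h23 𝒟 ha12 ha13 ha23 D hD a b c,
      restrict_cc I hI δ₁ δ₂ δ₃ h12 h13 h23 𝒟 ha12 ha13 ha23 D hD (!a) (!b) (!c)]
  rw [expand a b c, expand false false false]
  by_cases hone : δ₁ ∈ D ∨ δ₂ ∈ D ∨ δ₃ ∈ D
  · have hg' : sel δ₁ δ₂ δ₃ D (!a) (!b) (!c) = ! (sel δ₁ δ₂ δ₃ D a b c) := by
      simp only [sel]; split_ifs <;> first | rfl | tauto
    have h00 : sel δ₁ δ₂ δ₃ D (!false) (!false) (!false) = true := by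
      simp only [sel]; split_ifs <;> first | rfl | tauto
    have h01 : sel δ₁ δ₂ δ₃ D false false false = false := by
      simp only [sel]; split_ifs <;> rfl
    rw [hg', h00, h01]
    cases hgg : sel δ₁ δ₂ δ₃ D a b c
    · rfl
    · exact Nat.add_comm _ _
  · push_neg at hone
    obtain ⟨h1, h2, h3⟩ := hone
    have hall : ∀ x y z : Bool, sel δ₁ δ₂ δ₃ D x y z = false := by
      intro x y z; simp [sel, h1, h2, h3]
    rw [hall, hall, hall, hall]

lemma margins_eq (h12 : δ₁ ≠ δ₂) (h13 : δ₁ ≠ δ₃) (h23 : δ₂ ≠ δ₃)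
    (𝒟 : Finset (Finset (Fin m)))
    (ha12 : ¬ (indepGraph 𝒟).Adj δ₁ δ₂) (ha13 : ¬ (indepGraph 𝒟).Adj δ₁ δ₃)
    (ha23 : ¬ (indepGraph 𝒟).Adj δ₂ δ₃) (p : Fin 4) :
    ∀ D ∈ 𝒟, ∀ f : PCell I D,
      margin I (tquad I hI δ₁ δ₂ δ₃ p) D f = margin I (tquad I hI δ₁ δ₂ δ₃ 0) D f := by
  intro D hD f
  exact margin_tb I hI δ₁ δ₂ δ₃ h12 h13 h23 𝒟 ha12 ha13 ha23 D hD f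
    (tri p).1 (tri p).2.1 (tri p).2.2

lemma t_mem_fiber (h12 : δ₁ ≠ δ₂) (h13 : δ₁ ≠ δ₃) (h23 : δ₂ ≠ δ₃)
    (𝒟 : Finset (Finset (Fin m)))
    (ha12 : ¬ (indepGraph 𝒟).Adj δ₁ δ₂) (ha13 : ¬ (indepGraph 𝒟).Adj δ₁ δ₃)
    (ha23 : ¬ (indepGraph 𝒟).Adj δ₂ δ₃) (p : Fin 4) :
    tquad I hI δ₁ δ₂ δ₃ p ∈ fiber I 𝒟 (tquad I hI δ₁ δ₂ δ₃ 0) := by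
  intro D hD f
  exact margins_eq I hI δ₁ δ₂ δ₃ h12 h13 h23 𝒟 ha12 ha13 ha23 p D hD f

end Cells


section Cells2

variable (I : Fin m → ℕ) (hI : ∀ δ, 2 ≤ I δ) (δ₁ δ₂ δ₃ : Fin m)

lemma ccB_tri0 (δ : Fin m) :
    ccB I hI δ₁ δ₂ δ₃ (tri 0) δ = bitc I hI false δ := by
  show cc I hI δ₁ δ₂ δ₃ false false false δ = _
  simp only [cc]
  split_ifs <;> rfl

lemma ccB_ftri0_off (δ : Fin m) (e1 : δ ≠ δ₁) (e2 : δ ≠ δ₂) (e3 : δ ≠ δ₃) :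
    ccB I hI δ₁ δ₂ δ₃ (flip3 (tri 0)) δ = bitc I hI false δ := by
  show cc I hI δ₁ δ₂ δ₃ true true true δ = _
  simp [cc, e1, e2, e3]

lemma ccB_ftri0_on (δ : Fin m) (hδ : δ = δ₁ ∨ δ = δ₂ ∨ δ = δ₃) :
    ccB I hI δ₁ δ₂ δ₃ (flip3 (tri 0)) δ = bitc I hI true δ := by
  show cc I hI δ₁ δ₂ δ₃ true true true δ = _
  simp only [cc]
  split_ifs <;> first | rfl | tauto

lemma bitc_ne (δ : Fin m) : bitc I hI false δ ≠ bitc I hI true δ := by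
  intro h
  simpa using bitc_inj I hI h

lemma tquad0_eq : tquad I hI δ₁ δ₂ δ₃ 0
    = fun i => ind I (ccB I hI δ₁ δ₂ δ₃ (tri 0)) i
        + ind I (ccB I hI δ₁ δ₂ δ₃ (flip3 (tri 0))) i := rfl

lemma total_tquad0 (h12 : δ₁ ≠ δ₂) (h13 : δ₁ ≠ δ₃) (h23 : δ₂ ≠ δ₃) :
    total I (tquad I hI δ₁ δ₂ δ₃ 0) = 2 := by
  rw [tquad0_eq, total_add, total_ind, total_ind]

lemma fiber_sub (h12 : δ₁ ≠ δ₂) (h13 : δ₁ ≠ δ₃) (h23 : δ₂ ≠ δ₃)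
    (𝒟 : Finset (Finset (Fin m))) (hcov : ∀ δ : Fin m, ∃ D ∈ 𝒟, δ ∈ D)
    (n : Cell I → ℕ) (hn : n ∈ fiber I 𝒟 (tquad I hI δ₁ δ₂ δ₃ 0)) :
    ∃ p : Fin 4, n = tquad I hI δ₁ δ₂ δ₃ p := by
  classical
  obtain ⟨D1, hD1, hδ1D⟩ := hcov δ₁
  have htot : total I n = 2 := by
    rw [total_eq_sum_margin I n D1,
      Finset.sum_congr rfl (fun f _ => hn D1 hD1 f),
      ← total_eq_sum_margin, total_tquad0 I hI δ₁ δ₂ δ₃ h12 h13 h23]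
  obtain ⟨u, v, huv⟩ := total_two I n htot
  have hm1 : ∀ δ (x : Fin (I δ)),
      margin1 I n δ x = margin1 I (tquad I hI δ₁ δ₂ δ₃ 0) δ x := by
    intro δ x
    obtain ⟨D, hD, hδ⟩ := hcov δ
    rw [margin1_eq_sum I n D δ hδ x, margin1_eq_sum I _ D δ hδ x]
    exact Finset.sum_congr rfl fun f _ => by rw [hn D hD f]
  have hmn : ∀ δ (x : Fin (I δ)),
      ((if u δ = x then 1 else 0) + if v δ = x then 1 else 0 : ℕ)
      = (if ccB I hI δ₁ δ₂ δ₃ (tri 0) δ = x then 1 else 0)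
        + (if ccB I hI δ₁ δ₂ δ₃ (flip3 (tri 0)) δ = x then 1 else 0) := by
    intro δ x
    have h1 := hm1 δ x
    rw [huv, margin1_add, margin1_ind, margin1_ind, tquad0_eq, margin1_add,
      margin1_ind, margin1_ind] at h1
    exact h1
  have hoff : ∀ δ, δ ≠ δ₁ → δ ≠ δ₂ → δ ≠ δ₃ →
      u δ = bitc I hI false δ ∧ v δ = bitc I hI false δ := by
    intro δ e1 e2 e3
    constructor
    · have h := hmn δ (u δ)
      rw [ccB_tri0, ccB_ftri0_off I hI δ₁ δ₂ δ₃ δ e1 e2 e3] at h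
      by_cases hb : bitc I hI false δ = u δ
      · exact hb.symm
      · exfalso
        by_cases hvu : v δ = u δ <;> simp [hvu, hb] at h
    · have h := hmn δ (v δ)
      rw [ccB_tri0, ccB_ftri0_off I hI δ₁ δ₂ δ₃ δ e1 e2 e3] at h
      by_cases hb : bitc I hI false δ = v δ
      · exact hb.symm
      · exfalso
        by_cases hvu : u δ = v δ <;> simp [hvu, hb] at h
  have htri3 : ∀ δ, (δ = δ₁ ∨ δ = δ₂ ∨ δ = δ₃) →
      (u δ = bitc I hI false δ ∧ v δ = bitc I hI true δ) ∨
      (u δ = bitc I hI true δ ∧ v δ = bitc I hI false δ) := by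
    intro δ hδ
    have h := hmn δ (u δ)
    rw [ccB_tri0, ccB_ftri0_on I hI δ₁ δ₂ δ₃ δ hδ] at h
    have h' := hmn δ (v δ)
    rw [ccB_tri0, ccB_ftri0_on I hI δ₁ δ₂ δ₃ δ hδ] at h'
    have hb01 := bitc_ne I hI δ
    by_cases h0u : bitc I hI false δ = u δ <;> by_cases h1u : bitc I hI true δ = u δ
    · exact (hb01 (h0u.trans h1u.symm)).elim
    · left
      refine ⟨h0u.symm, ?_⟩
      by_cases h1v : bitc I hI true δ = v δ
      · exact h1v.symm
      · exfalso
        by_cases h0v : bitc I hI false δ = v δ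
        · have hvu : v δ = u δ := h0v.symm.trans h0u
          simp [hvu, h0u, h1u] at h
        · by_cases huv2 : u δ = v δ <;> simp [huv2, h0v, h1v] at h'
    · right
      refine ⟨h1u.symm, ?_⟩
      by_cases h0v : bitc I hI false δ = v δ
      · exact h0v.symm
      · exfalso
        have hvu : v δ ≠ u δ := by
          by_cases hvu : v δ = u δ
          · simp [hvu, h0u, h1u] at h
          · exact hvu
        by_cases h1v : bitc I hI true δ = v δ
        · exact hvu (h1v.symm.trans h1u)
        · by_cases huv2 : u δ = v δ <;> simp [huv2, h0v, h1v] at h'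
    · exfalso
      by_cases hvu : v δ = u δ <;> simp [hvu, h0u, h1u] at h
  obtain ⟨x1, hu1, hv1⟩ : ∃ x : Bool,
      u δ₁ = bitc I hI x δ₁ ∧ v δ₁ = bitc I hI (!x) δ₁ := by
    rcases htri3 δ₁ (Or.inl rfl) with ⟨hh1, hh2⟩ | ⟨hh1, hh2⟩
    exacts [⟨false, hh1, hh2⟩, ⟨true, hh1, hh2⟩]
  obtain ⟨x2, hu2, hv2⟩ : ∃ x : Bool,
      u δ₂ = bitc I hI x δ₂ ∧ v δ₂ = bitc I hI (!x) δ₂ := by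
    rcases htri3 δ₂ (Or.inr (Or.inl rfl)) with ⟨hh1, hh2⟩ | ⟨hh1, hh2⟩
    exacts [⟨false, hh1, hh2⟩, ⟨true, hh1, hh2⟩]
  obtain ⟨x3, hu3, hv3⟩ : ∃ x : Bool,
      u δ₃ = bitc I hI x δ₃ ∧ v δ₃ = bitc I hI (!x) δ₃ := by
    rcases htri3 δ₃ (Or.inr (Or.inr rfl)) with ⟨hh1, hh2⟩ | ⟨hh1, hh2⟩
    exacts [⟨false, hh1, hh2⟩, ⟨true, hh1, hh2⟩]
  have hu : u = ccB I hI δ₁ δ₂ δ₃ (x1, x2, x3) := by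
    funext δ
    show u δ = cc I hI δ₁ δ₂ δ₃ x1 x2 x3 δ
    by_cases e1 : δ = δ₁
    · subst e1; simp only [cc, if_pos rfl]; exact hu1
    · by_cases e2 : δ = δ₂
      · subst e2; simp only [cc, if_neg e1, if_pos rfl]; exact hu2
      · by_cases e3 : δ = δ₃
        · subst e3; simp only [cc, if_neg e1, if_neg e2, if_pos rfl]; exact hu3
        · simp only [cc, if_neg e1, if_neg e2, if_neg e3]
          exact (hoff δ e1 e2 e3).1
  have hv : v = ccB I hI δ₁ δ₂ δ₃ (flip3 (x1, x2, x3)) := by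
    funext δ
    show v δ = cc I hI δ₁ δ₂ δ₃ (!x1) (!x2) (!x3) δ
    by_cases e1 : δ = δ₁
    · subst e1; simp only [cc, if_pos rfl]; exact hv1
    · by_cases e2 : δ = δ₂
      · subst e2; simp only [cc, if_neg e1, if_pos rfl]; exact hv2
      · by_cases e3 : δ = δ₃
        · subst e3; simp only [cc, if_neg e1, if_neg e2, if_pos rfl]; exact hv3
        · simp only [cc, if_neg e1, if_neg e2, if_neg e3]
          exact (hoff δ e1 e2 e3).2
  have hntb : n = tbB I hI δ₁ δ₂ δ₃ (x1, x2, x3) := by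
    rw [huv, hu, hv]; rfl
  obtain ⟨p, hp | hp⟩ := hcover3 (x1, x2, x3)
  · exact ⟨p, by rw [hntb]; show _ = tbB I hI δ₁ δ₂ δ₃ (tri p); rw [hp]⟩
  · refine ⟨p, ?_⟩
    rw [hntb]
    show _ = tbB I hI δ₁ δ₂ δ₃ (tri p)
    rw [hp, tbB_flip]

/-! ### Replacement of moves in the degree-2 fiber -/

def Zset : Set (Cell I → ℤ) :=
  {z | ∃ p q : Fin 4, p ≠ q ∧
    z = tblZ I (tquad I hI δ₁ δ₂ δ₃ p) - tblZ I (tquad I hI δ₁ δ₂ δ₃ q)}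

def star (c : Fin 4) : Set (Cell I → ℤ) :=
  {z | ∃ p : Fin 4, p ≠ c ∧
    z = tblZ I (tquad I hI δ₁ δ₂ δ₃ p) - tblZ I (tquad I hI δ₁ δ₂ δ₃ c)}

lemma star_finite (c : Fin 4) : (star I hI δ₁ δ₂ δ₃ c).Finite := by
  have hsub : star I hI δ₁ δ₂ δ₃ c ⊆
      (fun p : Fin 4 => tblZ I (tquad I hI δ₁ δ₂ δ₃ p)
        - tblZ I (tquad I hI δ₁ δ₂ δ₃ c)) '' Set.univ := by
    rintro z ⟨p, hp, rfl⟩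
    exact ⟨p, trivial, rfl⟩
  exact Set.Finite.subset (Set.finite_univ.image _) hsub

lemma diff_inj (h12 : δ₁ ≠ δ₂) (h13 : δ₁ ≠ δ₃) (h23 : δ₂ ≠ δ₃)
    {p q p' q' : Fin 4} (hpq : p ≠ q) (hpq' : p' ≠ q')
    (h : tblZ I (tquad I hI δ₁ δ₂ δ₃ p) - tblZ I (tquad I hI δ₁ δ₂ δ₃ q)
       = tblZ I (tquad I hI δ₁ δ₂ δ₃ p') - tblZ I (tquad I hI δ₁ δ₂ δ₃ q')) :
    p = p' ∧ q = q' := by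
  have hp : p = p' := by
    by_contra hne
    have h1 := congrFun h (ccB I hI δ₁ δ₂ δ₃ (tri p))
    simp only [Pi.sub_apply, tblZ] at h1
    rw [t_apply_self I hI δ₁ δ₂ δ₃ h12 h13 h23 p,
      t_apply_ne I hI δ₁ δ₂ δ₃ h12 h13 h23 p q hpq,
      t_apply_ne I hI δ₁ δ₂ δ₃ h12 h13 h23 p p' hne] at h1
    omega
  subst hp
  have hq : q = q' := by
    by_contra hne
    have h1 := congrFun h (ccB I hI δ₁ δ₂ δ₃ (tri q))
    simp only [Pi.sub_apply, tblZ] at h1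
    rw [t_apply_self I hI δ₁ δ₂ δ₃ h12 h13 h23 q,
      t_apply_ne I hI δ₁ δ₂ δ₃ h12 h13 h23 q p (Ne.symm hpq),
      t_apply_ne I hI δ₁ δ₂ δ₃ h12 h13 h23 q q' hne] at h1
    omega
  exact ⟨rfl, hq⟩

lemma zero_not_mem_star (h12 : δ₁ ≠ δ₂) (h13 : δ₁ ≠ δ₃) (h23 : δ₂ ≠ δ₃) (c : Fin 4) :
    (0 : Cell I → ℤ) ∉ star I hI δ₁ δ₂ δ₃ c := by
  rintro ⟨p, hp, hz⟩
  have h1 := congrFun hz (ccB I hI δ₁ δ₂ δ₃ (tri p))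
  simp only [Pi.zero_apply, Pi.sub_apply, tblZ] at h1
  rw [t_apply_self I hI δ₁ δ₂ δ₃ h12 h13 h23 p,
    t_apply_ne I hI δ₁ δ₂ δ₃ h12 h13 h23 p c hp] at h1
  omega

/-- the modified Markov basis with star center `c` -/
def MB (𝒟 : Finset (Finset (Fin m))) (c : Fin 4) : Set (Cell I → ℤ) :=
  (Graver I 𝒟 \ Zset I hI δ₁ δ₂ δ₃) ∪ star I hI δ₁ δ₂ δ₃ c

lemma lift_path (M M' : Set (Cell I → ℤ)) (F : Set (Cell I → ℕ))
    (hstep1 : ∀ n n', n ∈ F → MStep I M F n n' →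
      Relation.ReflTransGen (MStep I M' F) n n') :
    ∀ n n', Relation.ReflTransGen (MStep I M F) n n' → n ∈ F →
      Relation.ReflTransGen (MStep I M' F) n n' := by
  intro n n' hpath
  induction hpath using Relation.ReflTransGen.head_induction_on with
  | refl => intro _; exact Relation.ReflTransGen.refl
  | head hstep htail ih =>
    intro hn
    exact Relation.ReflTransGen.trans (hstep1 _ _ hn hstep) (ih hstep.1)

lemma step_lift (h12 : δ₁ ≠ δ₂) (h13 : δ₁ ≠ δ₃) (h23 : δ₂ ≠ δ₃)
    (𝒟 : Finset (Finset (Fin m)))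
    (ha12 : ¬ (indepGraph 𝒟).Adj δ₁ δ₂) (ha13 : ¬ (indepGraph 𝒟).Adj δ₁ δ₃)
    (ha23 : ¬ (indepGraph 𝒟).Adj δ₂ δ₃)
    (c : Fin 4) (n₀ n n' : Cell I → ℕ) (hn : n ∈ fiber I 𝒟 n₀)
    (hst : MStep I (Graver I 𝒟) (fiber I 𝒟 n₀) n n') :
    Relation.ReflTransGen (MStep I (MB I hI δ₁ δ₂ δ₃ 𝒟 c) (fiber I 𝒟 n₀)) n n' := by
  classical
  obtain ⟨hn', hor⟩ := hst
  by_cases hz : (tblZ I n' - tblZ I n ∈ Zset I hI δ₁ δ₂ δ₃) ∨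
      (tblZ I n - tblZ I n' ∈ Zset I hI δ₁ δ₂ δ₃)
  · have hd : ∃ p q : Fin 4, p ≠ q ∧
        tblZ I n' - tblZ I n
          = tblZ I (tquad I hI δ₁ δ₂ δ₃ p) - tblZ I (tquad I hI δ₁ δ₂ δ₃ q) := by
      rcases hz with ⟨p, q, hpq, he⟩ | ⟨p, q, hpq, he⟩
      · exact ⟨p, q, hpq, he⟩
      · refine ⟨q, p, Ne.symm hpq, ?_⟩
        rw [show tblZ I n' - tblZ I n = -(tblZ I n - tblZ I n') from (neg_sub _ _).symm,
          he, neg_sub]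
    obtain ⟨p, q, hpq, he⟩ := hd
    have hle : ∀ i, tquad I hI δ₁ δ₂ δ₃ q i ≤ n i := by
      intro i
      have hei := congrFun he i
      simp only [Pi.sub_apply, tblZ] at hei
      rcases t_disj I hI δ₁ δ₂ δ₃ h12 h13 h23 p q hpq i with h0 | h0
      · rw [h0] at hei; omega
      · omega
    set r : Cell I → ℕ := fun i => n i - tquad I hI δ₁ δ₂ δ₃ q i with hrdef
    have hnq : n = fun i => tquad I hI δ₁ δ₂ δ₃ q i + r i := by
      funext i; have := hle i; simp only [hrdef]; omega
    have hnp : n' = fun i => tquad I hI δ₁ δ₂ δ₃ p i + r i := by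
      funext i
      have hei := congrFun he i
      simp only [Pi.sub_apply, tblZ] at hei
      have := hle i
      simp only [hrdef]
      omega
    have hmemF : ∀ a : Fin 4, (fun i => tquad I hI δ₁ δ₂ δ₃ a i + r i) ∈ fiber I 𝒟 n₀ := by
      intro a D hD f
      have h2 := hn D hD f
      rw [hnq, margin_add,
        margins_eq I hI δ₁ δ₂ δ₃ h12 h13 h23 𝒟 ha12 ha13 ha23 q D hD f] at h2
      rw [margin_add, margins_eq I hI δ₁ δ₂ δ₃ h12 h13 h23 𝒟 ha12 ha13 ha23 a D hD f]
      exact h2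
    have hstep1 : ∀ a b : Fin 4, (a = c ∨ b = c) →
        Relation.ReflTransGen (MStep I (MB I hI δ₁ δ₂ δ₃ 𝒟 c) (fiber I 𝒟 n₀))
          (fun i => tquad I hI δ₁ δ₂ δ₃ a i + r i)
          (fun i => tquad I hI δ₁ δ₂ δ₃ b i + r i) := by
      intro a b hab
      by_cases heq : a = b
      · rw [heq]
      · have hdiff : ∀ a b : Fin 4,
            tblZ I (fun i => tquad I hI δ₁ δ₂ δ₃ b i + r i)
              - tblZ I (fun i => tquad I hI δ₁ δ₂ δ₃ a i + r i)
            = tblZ I (tquad I hI δ₁ δ₂ δ₃ b) - tblZ I (tquad I hI δ₁ δ₂ δ₃ a) := by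
          intro a b
          funext i
          simp only [Pi.sub_apply, tblZ]
          push_cast
          ring
        refine Relation.ReflTransGen.single ⟨hmemF b, ?_⟩
        rcases hab with rfl | rfl
        · exact Or.inl (Or.inr ⟨b, fun hb => heq hb.symm, hdiff a b⟩)
        · exact Or.inr (Or.inr ⟨a, heq, hdiff b a⟩)
    rw [hnq, hnp]
    exact Relation.ReflTransGen.trans
      (hstep1 q c (Or.inr rfl)) (hstep1 c p (Or.inl rfl))
  · push_neg at hz
    refine Relation.ReflTransGen.single ⟨hn', ?_⟩
    rcases hor with h | h
    · exact Or.inl (Or.inl ⟨h, hz.1⟩)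
    · exact Or.inr (Or.inl ⟨h, hz.2⟩)


lemma MB_isMarkovBasis (h12 : δ₁ ≠ δ₂) (h13 : δ₁ ≠ δ₃) (h23 : δ₂ ≠ δ₃)
    (𝒟 : Finset (Finset (Fin m)))
    (ha12 : ¬ (indepGraph 𝒟).Adj δ₁ δ₂) (ha13 : ¬ (indepGraph 𝒟).Adj δ₁ δ₃)
    (ha23 : ¬ (indepGraph 𝒟).Adj δ₂ δ₃) (c : Fin 4) :
    IsMarkovBasis I 𝒟 (MB I hI δ₁ δ₂ δ₃ 𝒟 c) := by
  refine ⟨((graver_finite I 𝒟).diff).union (star_finite I hI δ₁ δ₂ δ₃ c), ?_, ?_⟩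
  · rintro z (⟨hz, -⟩ | ⟨p, hp, rfl⟩)
    · exact hz.1
    · intro D hD f
      rw [marginZ_sub, marginZ_tblZ, marginZ_tblZ,
        margins_eq I hI δ₁ δ₂ δ₃ h12 h13 h23 𝒟 ha12 ha13 ha23 p D hD f,
        margins_eq I hI δ₁ δ₂ δ₃ h12 h13 h23 𝒟 ha12 ha13 ha23 c D hD f, sub_self]
  · intro n₀ n hn n' hn'
    refine lift_path I _ _ _ ?_ n n'
      ((graver_isMarkovBasis I 𝒟).2.2 n₀ n hn n' hn') hn
    intro a b ha hab
    exact step_lift I hI δ₁ δ₂ δ₃ h12 h13 h23 𝒟 ha12 ha13 ha23 c n₀ a b ha hab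

lemma key_edge (h12 : δ₁ ≠ δ₂) (h13 : δ₁ ≠ δ₃) (h23 : δ₂ ≠ δ₃)
    (𝒟 : Finset (Finset (Fin m))) (hcov : ∀ δ : Fin m, ∃ D ∈ 𝒟, δ ∈ D)
    (ha12 : ¬ (indepGraph 𝒟).Adj δ₁ δ₂) (ha13 : ¬ (indepGraph 𝒟).Adj δ₁ δ₃)
    (ha23 : ¬ (indepGraph 𝒟).Adj δ₂ δ₃) (c : Fin 4)
    (M : Set (Cell I → ℤ)) (hMsub : M ⊆ MB I hI δ₁ δ₂ δ₃ 𝒟 c)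
    (hM : IsMarkovBasis I 𝒟 M) (p : Fin 4) (hp : p ≠ c) :
    tblZ I (tquad I hI δ₁ δ₂ δ₃ p) - tblZ I (tquad I hI δ₁ δ₂ δ₃ c) ∈ M := by
  classical
  have hconn := hM.2.2 (tquad I hI δ₁ δ₂ δ₃ 0) (tquad I hI δ₁ δ₂ δ₃ p)
    (t_mem_fiber I hI δ₁ δ₂ δ₃ h12 h13 h23 𝒟 ha12 ha13 ha23 p)
    (tquad I hI δ₁ δ₂ δ₃ c)
    (t_mem_fiber I hI δ₁ δ₂ δ₃ h12 h13 h23 𝒟 ha12 ha13 ha23 c)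
  rcases Relation.ReflTransGen.cases_head hconn with heq | ⟨n₁, hstep, -⟩
  · exfalso
    have h1 := t_apply_self I hI δ₁ δ₂ δ₃ h12 h13 h23 p
    rw [heq, t_apply_ne I hI δ₁ δ₂ δ₃ h12 h13 h23 p c hp] at h1
    omega
  · obtain ⟨hn₁F, hor⟩ := hstep
    obtain ⟨a, rfl⟩ := fiber_sub I hI δ₁ δ₂ δ₃ h12 h13 h23 𝒟 hcov n₁ hn₁F
    by_cases hap : a = p
    · exfalso
      subst hap
      rw [sub_self] at hor
      have h0M : (0 : Cell I → ℤ) ∈ M := hor.elim id id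
      rcases hMsub h0M with ⟨hg, -⟩ | hst
      · exact hg.2.1 rfl
      · exact zero_not_mem_star I hI δ₁ δ₂ δ₃ h12 h13 h23 c hst
    · rcases hor with hmem | hmem
      · exfalso
        rcases hMsub hmem with ⟨-, hnZ⟩ | ⟨b, hbc, hbe⟩
        · exact hnZ ⟨a, p, hap, rfl⟩
        · obtain ⟨-, h2⟩ := diff_inj I hI δ₁ δ₂ δ₃ h12 h13 h23 hap hbc hbe
          exact hp h2
      · rcases hMsub hmem with ⟨-, hnZ⟩ | ⟨b, hbc, hbe⟩
        · exact absurd ⟨p, a, Ne.symm hap, rfl⟩ hnZ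
        · obtain ⟨-, hac⟩ := diff_inj I hI δ₁ δ₂ δ₃ h12 h13 h23 (Ne.symm hap) hbc hbe
          rw [hac] at hmem
          exact hmem

end Cells2

end S5

/-- Theorem 2: if three variables are pairwise non-adjacent in the
independence graph, then minimal Markov bases are not unique. -/
theorem statement5 (I : Fin m → ℕ) (hI : ∀ δ, 2 ≤ I δ)
    (𝒟 : Finset (Finset (Fin m))) (hcov : ∀ δ : Fin m, ∃ D ∈ 𝒟, δ ∈ D)
    (hm : 3 ≤ m) (δ₁ δ₂ δ₃ : Fin m)
    (h12 : δ₁ ≠ δ₂) (h13 : δ₁ ≠ δ₃) (h23 : δ₂ ≠ δ₃)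
    (ha12 : ¬ (indepGraph 𝒟).Adj δ₁ δ₂)
    (ha13 : ¬ (indepGraph 𝒟).Adj δ₁ δ₃)
    (ha23 : ¬ (indepGraph 𝒟).Adj δ₂ δ₃) :
    ∃ M M' : Set (Cell I → ℤ),
      IsMinimalMarkovBasis I 𝒟 M ∧ IsMinimalMarkovBasis I 𝒟 M' ∧
        ¬ EqUpToSign I M M' := by
  
  classical
  obtain ⟨MA, hMAsub, hMAmin⟩ := S5.exists_minimal_subbasis I 𝒟 _
    (S5.MB_isMarkovBasis I hI δ₁ δ₂ δ₃ h12 h13 h23 𝒟 ha12 ha13 ha23 0)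
  obtain ⟨MBm, hMBsub, hMBmin⟩ := S5.exists_minimal_subbasis I 𝒟 _
    (S5.MB_isMarkovBasis I hI δ₁ δ₂ δ₃ h12 h13 h23 𝒟 ha12 ha13 ha23 1)
  refine ⟨MA, MBm, hMAmin, hMBmin, ?_⟩
  rintro ⟨hAB, -⟩
  have hz : tblZ I (S5.tquad I hI δ₁ δ₂ δ₃ 2) - tblZ I (S5.tquad I hI δ₁ δ₂ δ₃ 0) ∈ MA :=
    S5.key_edge I hI δ₁ δ₂ δ₃ h12 h13 h23 𝒟 hcov ha12 ha13 ha23 0 MA hMAsub hMAmin.1 2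
      (by decide)
  rcases hAB _ hz with hmem | hmem
  · rcases hMBsub hmem with ⟨-, hnZ⟩ | ⟨b, hb1, hbe⟩
    · exact hnZ ⟨2, 0, by decide, rfl⟩
    · obtain ⟨-, h0⟩ := S5.diff_inj I hI δ₁ δ₂ δ₃ h12 h13 h23
        (show (2 : Fin 4) ≠ 0 by decide) hb1 hbe
      exact absurd h0 (by decide)
  · rw [neg_sub] at hmem
    rcases hMBsub hmem with ⟨-, hnZ⟩ | ⟨b, hb1, hbe⟩
    · exact hnZ ⟨0, 2, by decide, rfl⟩
    · obtain ⟨-, h0⟩ := S5.diff_inj I hI δ₁ δ₂ δ₃ h12 h13 h23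
        (show (0 : Fin 4) ≠ 2 by decide) hb1 hbe
      exact absurd h0 (by decide)
end

section
/- (Theorem 8) Let D be any generating class and let b satisfy deg b = 2, F_b ≠ ∅ and Δ̄_b ≠ ∅; let Γ_1,…,Γ_c be the connected components of G(Δ̄_b), where c = c(b). Let {v_2,…,v_c} be a basis of GF(2)^{c−1} (coordinates indexed by l = 2,…,c), and for k = 1,…,c−1 let g^k be the map on tables which, for every l ∈ {2,…,c} with (v_{k+1})_l = 1, simultaneously swaps, in each non-degenerate variable δ ∈ Γ_l, the two levels having one-dimensional marginal 1. Then each g^k maps F_b bijectively to itself, and for any choice of n_1 ∈ F_b, defining recursively n_{l+2^{k−2}} = g^{k−1}(n_l) and z_{l+2^{k−2}} = n_l − n_{l+2^{k−2}} for k = 2,…,c and l = 1,…,2^{k−2}, the tables n_1,…,n_{2^{c−1}} are pairwise distinct and enumerate F_b, and M_b^* = {z_2,…,z_{2^{c−1}}} is a set of 2^{c−1} − 1 = |F_b| − 1 moves that connects F_b (hence is a minimal set of moves connecting F_b). -/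
open Finset

variable {m : ℕ}

/-- `Γ` enumerates the connected components `Γ_1, …, Γ_{d+1}` of the induced subgraph
`G(Δ̄_b)` of the independence graph on the non-degenerate variables. -/
def IsComponents (I : Fin m → ℕ) (𝒟 : Finset (Finset (Fin m))) (n₀ : Cell I → ℕ)
    (d : ℕ) (Γ : Fin (d + 1) → Set (Fin m)) : Prop :=
  (∀ k, (Γ k).Nonempty) ∧
  (⋃ k, Γ k) = ndSet I n₀ ∧
  (∀ k l, k ≠ l → Disjoint (Γ k) (Γ l)) ∧
  ∀ (k : Fin (d + 1)) (a b : ndSet I n₀), a.1 ∈ Γ k →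
    (((indepGraph 𝒟).induce (ndSet I n₀)).Reachable a b ↔ b.1 ∈ Γ k)

open scoped Classical in
/-- The cell obtained by swapping, in each variable `δ ∈ S`, the levels
`lev0 δ` and `lev1 δ`. -/
noncomputable def swapCells (I : Fin m → ℕ) (S : Set (Fin m))
    (lev0 lev1 : ∀ δ : Fin m, Fin (I δ)) (i : Cell I) : Cell I :=
  fun δ => if δ ∈ S then Equiv.swap (lev0 δ) (lev1 δ) (i δ) else i δ

/-- The induced level-swapping map on tables. -/
noncomputable def actSwap (I : Fin m → ℕ) (S : Set (Fin m))
    (lev0 lev1 : ∀ δ : Fin m, Fin (I δ)) (n : Cell I → ℕ) : Cell I → ℕ :=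
  fun i => n (swapCells I S lev0 lev1 i)

/-- The union of the components `Γ_l`, `l = 2, …, c`, selected by the coordinates of the
`GF(2)`-vector `v` that are equal to `1`. -/
def gSet {m : ℕ} (d : ℕ) (Γ : Fin (d + 1) → Set (Fin m)) (v : Fin d → ZMod 2) :
    Set (Fin m) :=
  ⋃ l : Fin d, if v l = 1 then Γ l.succ else ∅

section Aux

variable {m : ℕ}

/-- The table with a `1` in cells `i` and `j` (a `2` if they coincide). -/
def pairTbl (I : Fin m → ℕ) (i j : Cell I) : Cell I → ℕ :=
  fun x => (if i = x then 1 else 0) + (if j = x then 1 else 0)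

lemma pairTbl_comm (I : Fin m → ℕ) (i j : Cell I) : pairTbl I i j = pairTbl I j i := by
  funext x; simp [pairTbl, add_comm]

lemma pair_eval {α : Type*} [DecidableEq α] {a b a' b' : α}
    (h : ∀ f : α, ((if a = f then 1 else 0) + (if b = f then 1 else 0) : ℕ) =
      (if a' = f then 1 else 0) + (if b' = f then 1 else 0)) :
    (a = a' ∧ b = b') ∨ (a = b' ∧ b = a') := by
  by_cases h1 : a = a'
  · subst h1
    have hb := h b
    have h2 : b = b' := by
      by_contra h2
      have h2' : ¬ (b' = b) := fun h => h2 h.symm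
      split_ifs at hb <;> first | omega | contradiction | simp_all
    exact Or.inl ⟨rfl, h2⟩
  · have ha := h a
    have ha' := h a'
    have haa' : ¬ (a' = a) := fun h => h1 h.symm
    have hb'a : b' = a := by
      by_contra h2
      split_ifs at ha <;> first | omega | contradiction | simp_all
    have hba' : b = a' := by
      by_contra h2
      split_ifs at ha' <;> first | omega | contradiction | simp_all
    exact Or.inr ⟨hb'a.symm, hba'⟩

lemma total_pairTbl (I : Fin m → ℕ) (i j : Cell I) : total I (pairTbl I i j) = 2 := by
  unfold total pairTbl
  rw [Finset.sum_add_distrib, Finset.sum_ite_eq, Finset.sum_ite_eq]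
  simp

lemma exists_pairTbl {I : Fin m → ℕ} {n : Cell I → ℕ} (h : total I n = 2) :
    ∃ i j, n = pairTbl I i j := by
  classical
  unfold total at h
  have hx : ∃ x : Cell I, n x ≠ 0 := by
    by_contra hc
    push_neg at hc
    simp [hc] at h
  obtain ⟨x, hx⟩ := hx
  have hsplit : n x + ∑ y ∈ Finset.univ.erase x, n y = 2 := by
    rw [Finset.add_sum_erase _ _ (Finset.mem_univ x)]; exact h
  by_cases h2 : n x = 2
  · refine ⟨x, x, funext fun y => ?_⟩
    by_cases hy : y = x
    · subst hy; simp [pairTbl, h2]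
    · have h0 : ∑ y ∈ Finset.univ.erase x, n y = 0 := by omega
      have hny : n y = 0 := (Finset.sum_eq_zero_iff).mp h0 y (by simp [hy])
      have hxy : ¬ (x = y) := fun h => hy h.symm
      simp [pairTbl, hny, hxy]
  · have h1 : n x = 1 := by
      have hle : n x ≤ 2 := by omega
      omega
    have hrest : ∑ y ∈ Finset.univ.erase x, n y = 1 := by omega
    have hy : ∃ y ∈ Finset.univ.erase x, n y ≠ 0 := by
      by_contra hc
      push_neg at hc
      rw [Finset.sum_eq_zero hc] at hrest; omega
    obtain ⟨y, hymem, hy0⟩ := hy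
    have hyx : y ≠ x := (Finset.mem_erase.mp hymem).1
    have hy1 : n y = 1 := by
      have hle : n y ≤ 1 := hrest ▸ Finset.single_le_sum (f := n) (fun _ _ => Nat.zero_le _) hymem
      omega
    refine ⟨x, y, funext fun z => ?_⟩
    by_cases hzx : z = x
    · subst hzx
      have hyz : ¬ (y = z) := fun h => hyx h
      simp [pairTbl, h1, hyz]
    · by_cases hzy : z = y
      · subst hzy
        have hxz : ¬ (x = z) := fun h => hzx h.symm
        simp [pairTbl, hy1, hxz]
      · have h0 : ∑ w ∈ (Finset.univ.erase x).erase y, n w = 0 := by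
          have := Finset.add_sum_erase _ n hymem
          omega
        have hnz : n z = 0 := (Finset.sum_eq_zero_iff).mp h0 z (by simp [hzx, hzy])
        have hxz : ¬ (x = z) := fun h => hzx h.symm
        have hyz : ¬ (y = z) := fun h => hzy h.symm
        simp [pairTbl, hnz, hxz, hyz]

lemma margin_pairTbl (I : Fin m → ℕ) (D : Finset (Fin m)) (i j : Cell I) (f : PCell I D) :
    margin I (pairTbl I i j) D f =
      (if restrictC I D i = f then 1 else 0) + (if restrictC I D j = f then 1 else 0) := by
  unfold margin pairTbl
  have key : ∀ x : Cell I,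
      (if restrictC I D x = f then
        (if i = x then 1 else 0) + (if j = x then 1 else 0) else 0)
      = (if i = x then (if restrictC I D i = f then 1 else 0) else 0)
        + (if j = x then (if restrictC I D j = f then 1 else 0) else 0) := by
    intro x
    by_cases hi : i = x <;> by_cases hj : j = x <;> subst_vars <;> split_ifs <;> simp_all
  rw [Finset.sum_congr rfl (fun x _ => key x), Finset.sum_add_distrib,
    Finset.sum_ite_eq, Finset.sum_ite_eq]
  simp

lemma margin1_pairTbl (I : Fin m → ℕ) (i j : Cell I) (δ : Fin m) (v : Fin (I δ)) :
    margin1 I (pairTbl I i j) δ v =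
      (if i δ = v then 1 else 0) + (if j δ = v then 1 else 0) := by
  unfold margin1 pairTbl
  have key : ∀ x : Cell I,
      (if x δ = v then (if i = x then 1 else 0) + (if j = x then 1 else 0) else 0)
      = (if i = x then (if i δ = v then 1 else 0) else 0)
        + (if j = x then (if j δ = v then 1 else 0) else 0) := by
    intro x
    by_cases hi : i = x <;> by_cases hj : j = x <;> subst_vars <;> split_ifs <;> simp_all
  rw [Finset.sum_congr rfl (fun x _ => key x), Finset.sum_add_distrib,
    Finset.sum_ite_eq, Finset.sum_ite_eq]
  simp

lemma mem_fiber_self (I : Fin m → ℕ) (𝒟 : Finset (Finset (Fin m))) (n₀ : Cell I → ℕ) :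
    n₀ ∈ fiber I 𝒟 n₀ := fun _ _ _ => rfl

lemma margin1_fiber_eq {I : Fin m → ℕ} {𝒟 : Finset (Finset (Fin m))} {n₀ n : Cell I → ℕ}
    (hn : n ∈ fiber I 𝒟 n₀) {D : Finset (Fin m)} (hD : D ∈ 𝒟) {δ : Fin m} (hδ : δ ∈ D)
    (v : Fin (I δ)) : margin1 I n δ v = margin1 I n₀ δ v := by
  have key : ∀ nn : Cell I → ℕ, margin1 I nn δ v
      = ∑ f : PCell I D, (if f ⟨δ, hδ⟩ = v then margin I nn D f else 0) := by
    intro nn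
    unfold margin1 margin
    calc ∑ x : Cell I, (if x δ = v then nn x else 0)
        = ∑ x : Cell I, ∑ f : PCell I D,
            (if f ⟨δ, hδ⟩ = v then (if restrictC I D x = f then nn x else 0) else 0) := by
          refine Finset.sum_congr rfl fun x _ => ?_
          have key2 : ∀ f : PCell I D,
              (if f ⟨δ, hδ⟩ = v then (if restrictC I D x = f then nn x else 0) else 0)
              = (if restrictC I D x = f then (if x δ = v then nn x else 0) else 0) := by
            intro f
            by_cases hf : restrictC I D x = f
            · subst hf; simp [restrictC]
            · simp [hf]
          rw [Finset.sum_congr rfl (fun f _ => key2 f), Finset.sum_ite_eq]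
          simp
      _ = _ := by
          rw [Finset.sum_comm]
          refine Finset.sum_congr rfl fun f _ => ?_
          by_cases hf : f ⟨δ, hδ⟩ = v <;> simp [hf]
  rw [key n, key n₀]
  exact Finset.sum_congr rfl fun f _ => by rw [hn D hD f]

end Aux
section Struct

variable {m : ℕ} {I : Fin m → ℕ} {𝒟 : Finset (Finset (Fin m))} {n₀ : Cell I → ℕ}
variable {lev0 lev1 : ∀ δ : Fin m, Fin (I δ)}

lemma struct1 (hcov : ∀ δ : Fin m, ∃ D ∈ 𝒟, δ ∈ D)
    (hlev : ∀ δ, Nondegenerate I n₀ δ → lev0 δ ≠ lev1 δ ∧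
      margin1 I n₀ δ (lev0 δ) = 1 ∧ margin1 I n₀ δ (lev1 δ) = 1)
    {i j : Cell I} (hn : pairTbl I i j ∈ fiber I 𝒟 n₀) {δ : Fin m}
    (hδ : Nondegenerate I n₀ δ) :
    (i δ = lev0 δ ∧ j δ = lev1 δ) ∨ (i δ = lev1 δ ∧ j δ = lev0 δ) := by
  obtain ⟨hne, h0, h1⟩ := hlev δ hδ
  obtain ⟨D, hD, hδD⟩ := hcov δ
  have e0 : (if i δ = lev0 δ then 1 else 0) + (if j δ = lev0 δ then 1 else 0) = 1 := by
    rw [← margin1_pairTbl I i j δ (lev0 δ), margin1_fiber_eq hn hD hδD]; exact h0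
  have e1 : (if i δ = lev1 δ then 1 else 0) + (if j δ = lev1 δ then 1 else 0) = 1 := by
    rw [← margin1_pairTbl I i j δ (lev1 δ), margin1_fiber_eq hn hD hδD]; exact h1
  split_ifs at e0 e1 <;> first | omega | tauto | (exfalso; apply hne; simp_all)

lemma nd_ne (hcov : ∀ δ : Fin m, ∃ D ∈ 𝒟, δ ∈ D)
    (hlev : ∀ δ, Nondegenerate I n₀ δ → lev0 δ ≠ lev1 δ ∧
      margin1 I n₀ δ (lev0 δ) = 1 ∧ margin1 I n₀ δ (lev1 δ) = 1)
    {i j : Cell I} (hn : pairTbl I i j ∈ fiber I 𝒟 n₀) {δ : Fin m}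
    (hδ : Nondegenerate I n₀ δ) : i δ ≠ j δ := by
  obtain ⟨hne, -, -⟩ := hlev δ hδ
  rcases struct1 hcov hlev hn hδ with ⟨ha, hb⟩ | ⟨ha, hb⟩ <;> rw [ha, hb]
  · exact hne
  · exact hne.symm

lemma swap_val (hcov : ∀ δ : Fin m, ∃ D ∈ 𝒟, δ ∈ D)
    (hlev : ∀ δ, Nondegenerate I n₀ δ → lev0 δ ≠ lev1 δ ∧
      margin1 I n₀ δ (lev0 δ) = 1 ∧ margin1 I n₀ δ (lev1 δ) = 1)
    {i j : Cell I} (hn : pairTbl I i j ∈ fiber I 𝒟 n₀) {δ : Fin m}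
    (hδ : Nondegenerate I n₀ δ) :
    Equiv.swap (lev0 δ) (lev1 δ) (i δ) = j δ := by
  rcases struct1 hcov hlev hn hδ with ⟨ha, hb⟩ | ⟨ha, hb⟩ <;>
    simp [ha, hb, Equiv.swap_apply_left, Equiv.swap_apply_right]

lemma degen_exists (hdeg : ∀ n ∈ fiber I 𝒟 n₀, total I n = 2) {δ : Fin m}
    (hδ : ¬ Nondegenerate I n₀ δ) : ∃ v, margin1 I n₀ δ v = 2 := by
  obtain ⟨i₀, j₀, h₀⟩ := exists_pairTbl (hdeg n₀ (mem_fiber_self I 𝒟 n₀))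
  by_cases he : i₀ δ = j₀ δ
  · refine ⟨i₀ δ, ?_⟩
    rw [h₀, margin1_pairTbl, if_pos rfl, if_pos he.symm]
  · exfalso
    refine hδ ⟨i₀ δ, j₀ δ, he, ?_, ?_⟩
    · rw [h₀, margin1_pairTbl, if_pos rfl, if_neg (fun hh => he hh.symm)]
    · rw [h₀, margin1_pairTbl, if_neg he, if_pos rfl]

lemma degen_val (hcov : ∀ δ : Fin m, ∃ D ∈ 𝒟, δ ∈ D) {i j : Cell I}
    (hn : pairTbl I i j ∈ fiber I 𝒟 n₀) {δ : Fin m} {v : Fin (I δ)}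
    (hv : margin1 I n₀ δ v = 2) : i δ = v ∧ j δ = v := by
  obtain ⟨D, hD, hδD⟩ := hcov δ
  have e : (if i δ = v then 1 else 0) + (if j δ = v then 1 else 0) = 2 := by
    rw [← margin1_pairTbl I i j δ v, margin1_fiber_eq hn hD hδD]; exact hv
  split_ifs at e <;> first | omega | tauto

variable {d : ℕ} {Γ : Fin (d + 1) → Set (Fin m)}

lemma mem_gSet_iff {δ : Fin m} {v : Fin d → ZMod 2} :
    δ ∈ gSet d Γ v ↔ ∃ l : Fin d, v l = 1 ∧ δ ∈ Γ l.succ := by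
  simp only [gSet, Set.mem_iUnion]
  exact exists_congr fun l => by split <;> simp [*]

lemma gSet_sub_nd (hcomp : IsComponents I 𝒟 n₀ d Γ) {v : Fin d → ZMod 2} :
    gSet d Γ v ⊆ ndSet I n₀ := by
  intro δ h
  obtain ⟨l, -, h2⟩ := mem_gSet_iff.mp h
  rw [← hcomp.2.1]
  exact Set.mem_iUnion.mpr ⟨l.succ, h2⟩

lemma mem_gSet_of_comp (hcomp : IsComponents I 𝒟 n₀ d Γ) {δ : Fin m} {l : Fin d}
    (hδ : δ ∈ Γ l.succ) (v : Fin d → ZMod 2) : δ ∈ gSet d Γ v ↔ v l = 1 := by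
  rw [mem_gSet_iff]
  constructor
  · rintro ⟨l', h1, h2⟩
    have : l' = l := by
      by_contra hne
      have hsne : l'.succ ≠ l.succ := fun hh => hne (Fin.succ_injective _ hh)
      exact Set.disjoint_left.mp (hcomp.2.2.1 l'.succ l.succ hsne) h2 hδ
    exact this ▸ h1
  · exact fun h1 => ⟨l, h1, hδ⟩

lemma not_mem_gSet_zero_comp (hcomp : IsComponents I 𝒟 n₀ d Γ) {δ : Fin m}
    (hδ : δ ∈ Γ 0) (v : Fin d → ZMod 2) : δ ∉ gSet d Γ v := by
  intro h
  obtain ⟨l, -, h2⟩ := mem_gSet_iff.mp h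
  exact Set.disjoint_left.mp (hcomp.2.2.1 l.succ 0 (Fin.succ_ne_zero l)) h2 hδ

lemma not_mem_gSet_not_nd (hcomp : IsComponents I 𝒟 n₀ d Γ) {δ : Fin m}
    (hδ : δ ∉ ndSet I n₀) (v : Fin d → ZMod 2) : δ ∉ gSet d Γ v :=
  fun h => hδ (gSet_sub_nd hcomp h)

lemma swapCells_apply_mem {S : Set (Fin m)} {δ : Fin m} (h : δ ∈ S) (x : Cell I) :
    swapCells I S lev0 lev1 x δ = Equiv.swap (lev0 δ) (lev1 δ) (x δ) := by
  simp [swapCells, h]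

lemma swapCells_apply_not_mem {S : Set (Fin m)} {δ : Fin m} (h : δ ∉ S) (x : Cell I) :
    swapCells I S lev0 lev1 x δ = x δ := by
  simp [swapCells, h]

lemma swapCells_invol (S : Set (Fin m)) (x : Cell I) :
    swapCells I S lev0 lev1 (swapCells I S lev0 lev1 x) = x := by
  funext δ
  by_cases h : δ ∈ S <;> simp [swapCells, h]

lemma actSwap_invol (S : Set (Fin m)) (n : Cell I → ℕ) :
    actSwap I S lev0 lev1 (actSwap I S lev0 lev1 n) = n := by
  funext x; simp [actSwap, swapCells_invol]

lemma actSwap_pairTbl (S : Set (Fin m)) (i j : Cell I) :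
    actSwap I S lev0 lev1 (pairTbl I i j)
      = pairTbl I (swapCells I S lev0 lev1 i) (swapCells I S lev0 lev1 j) := by
  funext x
  unfold actSwap pairTbl
  have key : ∀ y : Cell I,
      (y = swapCells I S lev0 lev1 x) = (swapCells I S lev0 lev1 y = x) := by
    intro y
    apply propext
    constructor
    · intro h; rw [h, swapCells_invol]
    · intro h; rw [← h, swapCells_invol]
  simp only [key]

lemma swapCells_gSet_add (hcomp : IsComponents I 𝒟 n₀ d Γ) (v w : Fin d → ZMod 2)
    (x : Cell I) : swapCells I (gSet d Γ (v + w)) lev0 lev1 x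
      = swapCells I (gSet d Γ v) lev0 lev1 (swapCells I (gSet d Γ w) lev0 lev1 x) := by
  funext δ
  by_cases hδ : ∃ l : Fin d, δ ∈ Γ l.succ
  · obtain ⟨l, hl⟩ := hδ
    have mv := mem_gSet_of_comp hcomp hl v
    have mw := mem_gSet_of_comp hcomp hl w
    have mvw := mem_gSet_of_comp hcomp hl (v + w)
    have two : ∀ u : ZMod 2, u = 0 ∨ u = 1 := by decide
    have hadd : (v + w) l = v l + w l := rfl
    rcases two (v l) with hv1 | hv1 <;> rcases two (w l) with hw1 | hw1
    · have hvw : ¬ ((v + w) l = 1) := by rw [hadd, hv1, hw1]; decide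
      simp [swapCells, mv, mw, mvw, hv1, hw1, hvw]
    · have hvw : (v + w) l = 1 := by rw [hadd, hv1, hw1]; decide
      simp [swapCells, mv, mw, mvw, hv1, hw1, hvw]
    · have hvw : (v + w) l = 1 := by rw [hadd, hv1, hw1]; decide
      simp [swapCells, mv, mw, mvw, hv1, hw1, hvw]
    · have hvw : ¬ ((v + w) l = 1) := by rw [hadd, hv1, hw1]; decide
      simp [swapCells, mv, mw, mvw, hv1, hw1, hvw, Equiv.swap_apply_self]
  · have h0 : ∀ u : Fin d → ZMod 2, δ ∉ gSet d Γ u := by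
      intro u hu
      obtain ⟨l, -, h2⟩ := mem_gSet_iff.mp hu
      exact hδ ⟨l, h2⟩
    simp [swapCells, h0 v, h0 w, h0 (v + w)]

lemma actSwap_add (hcomp : IsComponents I 𝒟 n₀ d Γ) (v w : Fin d → ZMod 2)
    (n : Cell I → ℕ) : actSwap I (gSet d Γ (v + w)) lev0 lev1 n
      = actSwap I (gSet d Γ v) lev0 lev1 (actSwap I (gSet d Γ w) lev0 lev1 n) := by
  funext x
  show n (swapCells I (gSet d Γ (v + w)) lev0 lev1 x) = _
  rw [add_comm]
  exact congrArg n (swapCells_gSet_add hcomp w v x)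

lemma gSet_saturated (hcomp : IsComponents I 𝒟 n₀ d Γ) {v : Fin d → ZMod 2}
    {D : Finset (Fin m)} (hD : D ∈ 𝒟) {δ δ' : Fin m} (hδ : δ ∈ D) (hδ' : δ' ∈ D)
    (hδS : δ ∈ gSet d Γ v) (hnd' : δ' ∈ ndSet I n₀) : δ' ∈ gSet d Γ v := by
  obtain ⟨l, hvl, hδl⟩ := mem_gSet_iff.mp hδS
  have hndδ : δ ∈ ndSet I n₀ := gSet_sub_nd hcomp hδS
  by_cases heq : δ = δ'
  · subst heq; exact hδS
  · have hadj : (indepGraph 𝒟).Adj δ δ' := by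
      rw [indepGraph, SimpleGraph.fromRel_adj]
      exact ⟨heq, Or.inl ⟨D, hD, hδ, hδ'⟩⟩
    have hadj' : ((indepGraph 𝒟).induce (ndSet I n₀)).Adj ⟨δ, hndδ⟩ ⟨δ', hnd'⟩ := hadj
    have := (hcomp.2.2.2 l.succ ⟨δ, hndδ⟩ ⟨δ', hnd'⟩ hδl).mp hadj'.reachable
    exact mem_gSet_iff.mpr ⟨l, hvl, this⟩

end Struct
section Fiber

variable {m : ℕ} {I : Fin m → ℕ} {𝒟 : Finset (Finset (Fin m))} {n₀ : Cell I → ℕ}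
variable {lev0 lev1 : ∀ δ : Fin m, Fin (I δ)}
variable {d : ℕ} {Γ : Fin (d + 1) → Set (Fin m)}

lemma actSwap_mem_fiber (hdeg : ∀ n ∈ fiber I 𝒟 n₀, total I n = 2)
    (hcov : ∀ δ : Fin m, ∃ D ∈ 𝒟, δ ∈ D)
    (hlev : ∀ δ, Nondegenerate I n₀ δ → lev0 δ ≠ lev1 δ ∧
      margin1 I n₀ δ (lev0 δ) = 1 ∧ margin1 I n₀ δ (lev1 δ) = 1)
    (hcomp : IsComponents I 𝒟 n₀ d Γ) (v : Fin d → ZMod 2)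
    {n : Cell I → ℕ} (hn : n ∈ fiber I 𝒟 n₀) :
    actSwap I (gSet d Γ v) lev0 lev1 n ∈ fiber I 𝒟 n₀ := by
  obtain ⟨i, j, rfl⟩ := exists_pairTbl (hdeg n hn)
  have hn' : pairTbl I j i ∈ fiber I 𝒟 n₀ := by rw [pairTbl_comm]; exact hn
  rw [actSwap_pairTbl]
  intro D hD f
  rw [margin_pairTbl, ← hn D hD f, margin_pairTbl]
  by_cases hDS : ∃ δ ∈ D, δ ∈ gSet d Γ v
  · obtain ⟨δ0, hδ0D, hδ0S⟩ := hDS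
    have hswap : ∀ δ' ∈ D, swapCells I (gSet d Γ v) lev0 lev1 i δ' = j δ'
        ∧ swapCells I (gSet d Γ v) lev0 lev1 j δ' = i δ' := by
      intro δ' hδ'
      by_cases hnd' : Nondegenerate I n₀ δ'
      · have hin : δ' ∈ gSet d Γ v := gSet_saturated hcomp hD hδ0D hδ' hδ0S hnd'
        constructor
        · rw [swapCells_apply_mem hin]
          exact swap_val hcov hlev hn hnd'
        · rw [swapCells_apply_mem hin]
          exact swap_val hcov hlev hn' hnd'
      · have hnin : δ' ∉ gSet d Γ v := not_mem_gSet_not_nd hcomp hnd' v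
        obtain ⟨w, hw⟩ := degen_exists hdeg hnd'
        obtain ⟨h1, h2⟩ := degen_val hcov hn hw
        constructor
        · rw [swapCells_apply_not_mem hnin, h1, h2]
        · rw [swapCells_apply_not_mem hnin, h1, h2]
    have e1 : restrictC I D (swapCells I (gSet d Γ v) lev0 lev1 i) = restrictC I D j :=
      funext fun δ' => (hswap δ'.1 δ'.2).1
    have e2 : restrictC I D (swapCells I (gSet d Γ v) lev0 lev1 j) = restrictC I D i :=
      funext fun δ' => (hswap δ'.1 δ'.2).2
    rw [e1, e2, add_comm]
  · push_neg at hDS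
    have e1 : restrictC I D (swapCells I (gSet d Γ v) lev0 lev1 i) = restrictC I D i :=
      funext fun δ' => by simp [restrictC, swapCells, hDS δ'.1 δ'.2]
    have e2 : restrictC I D (swapCells I (gSet d Γ v) lev0 lev1 j) = restrictC I D j :=
      funext fun δ' => by simp [restrictC, swapCells, hDS δ'.1 δ'.2]
    rw [e1, e2]

lemma sigma_ne (hcov : ∀ δ : Fin m, ∃ D ∈ 𝒟, δ ∈ D)
    (hlev : ∀ δ, Nondegenerate I n₀ δ → lev0 δ ≠ lev1 δ ∧
      margin1 I n₀ δ (lev0 δ) = 1 ∧ margin1 I n₀ δ (lev1 δ) = 1)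
    (hcomp : IsComponents I 𝒟 n₀ d Γ)
    {i j : Cell I} (hn : pairTbl I i j ∈ fiber I 𝒟 n₀)
    {v : Fin d → ZMod 2} (hv : v ≠ 0) :
    swapCells I (gSet d Γ v) lev0 lev1 i ≠ i ∧
    swapCells I (gSet d Γ v) lev0 lev1 i ≠ j ∧
    swapCells I (gSet d Γ v) lev0 lev1 j ≠ j ∧
    swapCells I (gSet d Γ v) lev0 lev1 j ≠ i := by
  have hn' : pairTbl I j i ∈ fiber I 𝒟 n₀ := by rw [pairTbl_comm]; exact hn
  obtain ⟨l0, hl0⟩ : ∃ l0, v l0 = 1 := by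
    by_contra hc
    push_neg at hc
    apply hv
    funext l
    have two : ∀ u : ZMod 2, u = 0 ∨ u = 1 := by decide
    rcases two (v l) with h | h
    · exact h
    · exact absurd h (hc l)
  obtain ⟨δ, hδ⟩ := hcomp.1 l0.succ
  obtain ⟨δ', hδ'⟩ := hcomp.1 0
  have hδS : δ ∈ gSet d Γ v := (mem_gSet_of_comp hcomp hδ v).mpr hl0
  have hδ'S : δ' ∉ gSet d Γ v := not_mem_gSet_zero_comp hcomp hδ' v
  have hndδ : Nondegenerate I n₀ δ := gSet_sub_nd hcomp hδS
  have hndδ' : Nondegenerate I n₀ δ' := by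
    have : δ' ∈ ndSet I n₀ := hcomp.2.1 ▸ Set.mem_iUnion.mpr ⟨0, hδ'⟩
    exact this
  have hij : i δ ≠ j δ := nd_ne hcov hlev hn hndδ
  have hij' : i δ' ≠ j δ' := nd_ne hcov hlev hn hndδ'
  have si : swapCells I (gSet d Γ v) lev0 lev1 i δ = j δ := by
    rw [swapCells_apply_mem hδS]; exact swap_val hcov hlev hn hndδ
  have sj : swapCells I (gSet d Γ v) lev0 lev1 j δ = i δ := by
    rw [swapCells_apply_mem hδS]; exact swap_val hcov hlev hn' hndδ
  have si' : swapCells I (gSet d Γ v) lev0 lev1 i δ' = i δ' :=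
    swapCells_apply_not_mem hδ'S i
  have sj' : swapCells I (gSet d Γ v) lev0 lev1 j δ' = j δ' :=
    swapCells_apply_not_mem hδ'S j
  refine ⟨?_, ?_, ?_, ?_⟩
  · intro h; exact hij (by rw [← congrFun h δ, si])
  · intro h; exact hij' (by rw [← congrFun h δ', si'])
  · intro h; exact hij (by rw [← congrFun h δ, sj])
  · intro h; exact hij' (by rw [← congrFun h δ', sj'])

end Fiber
section Fiber2

variable {m : ℕ} {I : Fin m → ℕ} {𝒟 : Finset (Finset (Fin m))} {n₀ : Cell I → ℕ}
variable {lev0 lev1 : ∀ δ : Fin m, Fin (I δ)}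
variable {d : ℕ} {Γ : Fin (d + 1) → Set (Fin m)}

lemma actSwap_free (hdeg : ∀ n ∈ fiber I 𝒟 n₀, total I n = 2)
    (hcov : ∀ δ : Fin m, ∃ D ∈ 𝒟, δ ∈ D)
    (hlev : ∀ δ, Nondegenerate I n₀ δ → lev0 δ ≠ lev1 δ ∧
      margin1 I n₀ δ (lev0 δ) = 1 ∧ margin1 I n₀ δ (lev1 δ) = 1)
    (hcomp : IsComponents I 𝒟 n₀ d Γ)
    {n : Cell I → ℕ} (hn : n ∈ fiber I 𝒟 n₀) {v : Fin d → ZMod 2} (hv : v ≠ 0) :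
    actSwap I (gSet d Γ v) lev0 lev1 n ≠ n := by
  obtain ⟨i, j, rfl⟩ := exists_pairTbl (hdeg n hn)
  rw [actSwap_pairTbl]
  intro heq
  obtain ⟨c1, c2, -, -⟩ := sigma_ne hcov hlev hcomp hn hv
  have h := congrFun heq (swapCells I (gSet d Γ v) lev0 lev1 i)
  unfold pairTbl at h
  rw [if_pos rfl] at h
  have d1 : ¬ (i = swapCells I (gSet d Γ v) lev0 lev1 i) := fun hh => c1 hh.symm
  have d2 : ¬ (j = swapCells I (gSet d Γ v) lev0 lev1 i) := fun hh => c2 hh.symm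
  split_ifs at h <;> first | omega | contradiction

lemma orbit_inj (hdeg : ∀ n ∈ fiber I 𝒟 n₀, total I n = 2)
    (hcov : ∀ δ : Fin m, ∃ D ∈ 𝒟, δ ∈ D)
    (hlev : ∀ δ, Nondegenerate I n₀ δ → lev0 δ ≠ lev1 δ ∧
      margin1 I n₀ δ (lev0 δ) = 1 ∧ margin1 I n₀ δ (lev1 δ) = 1)
    (hcomp : IsComponents I 𝒟 n₀ d Γ)
    {n : Cell I → ℕ} (hn : n ∈ fiber I 𝒟 n₀) {u u' : Fin d → ZMod 2} (hne : u ≠ u') :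
    actSwap I (gSet d Γ u) lev0 lev1 n ≠ actSwap I (gSet d Γ u') lev0 lev1 n := by
  intro heq
  have hsum : u + u' ≠ 0 := by
    intro h0
    apply hne
    funext l
    have two : ∀ a b : ZMod 2, a + b = 0 → a = b := by decide
    exact two _ _ (congrFun h0 l)
  apply actSwap_free hdeg hcov hlev hcomp hn hsum
  rw [actSwap_add hcomp, ← heq, actSwap_invol]

lemma support_disj (hdeg : ∀ n ∈ fiber I 𝒟 n₀, total I n = 2)
    (hcov : ∀ δ : Fin m, ∃ D ∈ 𝒟, δ ∈ D)
    (hlev : ∀ δ, Nondegenerate I n₀ δ → lev0 δ ≠ lev1 δ ∧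
      margin1 I n₀ δ (lev0 δ) = 1 ∧ margin1 I n₀ δ (lev1 δ) = 1)
    (hcomp : IsComponents I 𝒟 n₀ d Γ)
    {n : Cell I → ℕ} (hn : n ∈ fiber I 𝒟 n₀) {v : Fin d → ZMod 2} (hv : v ≠ 0) :
    ∀ x, n x = 0 ∨ actSwap I (gSet d Γ v) lev0 lev1 n x = 0 := by
  obtain ⟨i, j, rfl⟩ := exists_pairTbl (hdeg n hn)
  obtain ⟨c1, c2, c3, c4⟩ := sigma_ne hcov hlev hcomp hn hv
  intro x
  rw [actSwap_pairTbl]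
  by_cases hx : pairTbl I i j x = 0
  · exact Or.inl hx
  · right
    have hix : i = x ∨ j = x := by
      unfold pairTbl at hx
      split_ifs at hx <;> tauto
    unfold pairTbl
    rcases hix with rfl | rfl
    · rw [if_neg c1, if_neg c4]
    · rw [if_neg c2, if_neg c3]

lemma fiber_orbit (hdeg : ∀ n ∈ fiber I 𝒟 n₀, total I n = 2)
    (hcov : ∀ δ : Fin m, ∃ D ∈ 𝒟, δ ∈ D)
    (hlev : ∀ δ, Nondegenerate I n₀ δ → lev0 δ ≠ lev1 δ ∧
      margin1 I n₀ δ (lev0 δ) = 1 ∧ margin1 I n₀ δ (lev1 δ) = 1)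
    (hcomp : IsComponents I 𝒟 n₀ d Γ)
    {n : Cell I → ℕ} (hn : n ∈ fiber I 𝒟 n₀) :
    ∃ v, n = actSwap I (gSet d Γ v) lev0 lev1 n₀ := by
  classical
  obtain ⟨i₀, j₀, h₀⟩ := exists_pairTbl (hdeg n₀ (mem_fiber_self I 𝒟 n₀))
  have hn₀ : pairTbl I i₀ j₀ ∈ fiber I 𝒟 n₀ := h₀ ▸ mem_fiber_self I 𝒟 n₀
  have hndΓ : ∀ (k : Fin (d + 1)) δ, δ ∈ Γ k → Nondegenerate I n₀ δ := by
    intro k δ h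
    have : δ ∈ ndSet I n₀ := hcomp.2.1 ▸ Set.mem_iUnion.mpr ⟨k, h⟩
    exact this
  set pick : Fin (d + 1) → Fin m := fun k => (hcomp.1 k).some with hpickdef
  have hpick : ∀ k, pick k ∈ Γ k := fun k => (hcomp.1 k).some_mem
  have hne₀ : ∀ δ, Nondegenerate I n₀ δ → i₀ δ ≠ j₀ δ :=
    fun δ h => nd_ne hcov hlev hn₀ h
  have main : ∀ i j : Cell I, pairTbl I i j ∈ fiber I 𝒟 n₀ → i (pick 0) = i₀ (pick 0) →
      ∃ v, pairTbl I i j = actSwap I (gSet d Γ v) lev0 lev1 n₀ := by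
    intro i j hnn hA0
    have agree : ∀ δ, Nondegenerate I n₀ δ →
        (i δ = i₀ δ ∧ j δ = j₀ δ) ∨ (i δ = j₀ δ ∧ j δ = i₀ δ) := by
      intro δ hδ
      rcases struct1 hcov hlev hnn hδ with ⟨h1, h2⟩ | ⟨h1, h2⟩ <;>
        rcases struct1 hcov hlev hn₀ hδ with ⟨h3, h4⟩ | ⟨h3, h4⟩
      · exact Or.inl ⟨h1.trans h3.symm, h2.trans h4.symm⟩
      · exact Or.inr ⟨h1.trans h4.symm, h2.trans h3.symm⟩
      · exact Or.inr ⟨h1.trans h4.symm, h2.trans h3.symm⟩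
      · exact Or.inl ⟨h1.trans h3.symm, h2.trans h4.symm⟩
    have edge : ∀ D ∈ 𝒟, ∀ δ δ', δ ∈ D → δ' ∈ D → Nondegenerate I n₀ δ →
        Nondegenerate I n₀ δ' → (i δ = i₀ δ ↔ i δ' = i₀ δ') := by
      intro D hD δ δ' hδD hδ'D hnd hnd'
      have hev : ∀ f : PCell I D,
          ((if restrictC I D i = f then 1 else 0) + (if restrictC I D j = f then 1 else 0) : ℕ)
          = (if restrictC I D i₀ = f then 1 else 0) + (if restrictC I D j₀ = f then 1 else 0) := by
        intro f
        have h1 := hnn D hD f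
        rw [h₀] at h1
        rw [margin_pairTbl, margin_pairTbl] at h1
        exact h1
      rcases pair_eval hev with ⟨e1, e2⟩ | ⟨e1, e2⟩
      · exact iff_of_true (congrFun e1 ⟨δ, hδD⟩) (congrFun e1 ⟨δ', hδ'D⟩)
      · refine iff_of_false ?_ ?_
        · intro h
          exact hne₀ δ hnd (h.symm.trans (congrFun e1 ⟨δ, hδD⟩))
        · intro h
          exact hne₀ δ' hnd' (h.symm.trans (congrFun e1 ⟨δ', hδ'D⟩))
    have walkp : ∀ (a b : ↑(ndSet I n₀))
        (w : ((indepGraph 𝒟).induce (ndSet I n₀)).Walk a b),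
        (i a.1 = i₀ a.1 ↔ i b.1 = i₀ b.1) := by
      intro a b w
      induction w with
      | nil => exact Iff.rfl
      | @cons u x y h p ih =>
        have hadj : (indepGraph 𝒟).Adj u.1 x.1 := h
        rw [indepGraph, SimpleGraph.fromRel_adj] at hadj
        obtain ⟨hneq, hor⟩ := hadj
        have hstep : i u.1 = i₀ u.1 ↔ i x.1 = i₀ x.1 := by
          rcases hor with ⟨D, hD, h1, h2⟩ | ⟨D, hD, h1, h2⟩
          · exact edge D hD u.1 x.1 h1 h2 u.2 x.2
          · exact edge D hD u.1 x.1 h2 h1 u.2 x.2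
        exact hstep.trans ih
    have compp : ∀ (k : Fin (d + 1)) δ δ', δ ∈ Γ k → δ' ∈ Γ k →
        (i δ = i₀ δ ↔ i δ' = i₀ δ') := by
      intro k δ δ' h1 h2
      have r := (hcomp.2.2.2 k ⟨δ, hndΓ k δ h1⟩ ⟨δ', hndΓ k δ' h2⟩ h1).mpr h2
      obtain ⟨w⟩ := r
      exact walkp _ _ w
    refine ⟨fun l => if i (pick l.succ) = j₀ (pick l.succ) then 1 else 0, ?_⟩
    set v : Fin d → ZMod 2 :=
      fun l => if i (pick l.succ) = j₀ (pick l.succ) then 1 else 0 with hvdef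
    rw [h₀, actSwap_pairTbl]
    have goal1 : ∀ δ, swapCells I (gSet d Γ v) lev0 lev1 i₀ δ = i δ ∧
        swapCells I (gSet d Γ v) lev0 lev1 j₀ δ = j δ := by
      intro δ
      by_cases hnd : Nondegenerate I n₀ δ
      · have hδnd : δ ∈ ndSet I n₀ := hnd
        obtain ⟨k, hk⟩ := Set.mem_iUnion.mp (hcomp.2.1.symm ▸ hδnd)
        have swap0 : Equiv.swap (lev0 δ) (lev1 δ) (i₀ δ) = j₀ δ :=
          swap_val hcov hlev hn₀ hnd
        have swap0' : Equiv.swap (lev0 δ) (lev1 δ) (j₀ δ) = i₀ δ := by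
          have hn₀' : pairTbl I j₀ i₀ ∈ fiber I 𝒟 n₀ := by rw [pairTbl_comm]; exact hn₀
          exact swap_val hcov hlev hn₀' hnd
        rcases Fin.eq_zero_or_eq_succ k with hk0 | ⟨l, hkl⟩
        · subst hk0
          have hnotin : δ ∉ gSet d Γ v := not_mem_gSet_zero_comp hcomp hk v
          have hAδ : i δ = i₀ δ := (compp 0 (pick 0) δ (hpick 0) hk).mp hA0
          have hBδ : j δ = j₀ δ := by
            rcases agree δ hnd with ⟨h1, h2⟩ | ⟨h1, h2⟩
            · exact h2
            · exact absurd (hAδ.symm.trans h1) (hne₀ δ hnd)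
          rw [swapCells_apply_not_mem hnotin, swapCells_apply_not_mem hnotin]
          exact ⟨hAδ.symm, hBδ.symm⟩
        · subst hkl
          have hiff := compp l.succ (pick l.succ) δ (hpick l.succ) hk
          by_cases hvl : i (pick l.succ) = j₀ (pick l.succ)
          · have hv1 : v l = 1 := by rw [hvdef]; exact if_pos hvl
            have hδin : δ ∈ gSet d Γ v := (mem_gSet_of_comp hcomp hk v).mpr hv1
            have hnAp : ¬ (i (pick l.succ) = i₀ (pick l.succ)) := fun h =>
              hne₀ (pick l.succ) (hndΓ l.succ _ (hpick l.succ)) (h.symm.trans hvl)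
            have hnAδ : ¬ (i δ = i₀ δ) := fun h => hnAp (hiff.mpr h)
            have hBδ : i δ = j₀ δ ∧ j δ = i₀ δ :=
              (agree δ hnd).resolve_left (fun hh => hnAδ hh.1)
            rw [swapCells_apply_mem hδin, swapCells_apply_mem hδin, swap0, swap0']
            exact ⟨hBδ.1.symm, hBδ.2.symm⟩
          · have hv1 : ¬ (v l = 1) := by
              rw [hvdef]
              simp only [if_neg hvl]
              decide
            have hnotin : δ ∉ gSet d Γ v :=
              fun hh => hv1 ((mem_gSet_of_comp hcomp hk v).mp hh)
            have hAp : i (pick l.succ) = i₀ (pick l.succ) :=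
              ((agree (pick l.succ) (hndΓ l.succ _ (hpick l.succ))).resolve_right
                (fun hh => hvl hh.1)).1
            have hAδ : i δ = i₀ δ := hiff.mp hAp
            have hBδ : j δ = j₀ δ := by
              rcases agree δ hnd with ⟨h1, h2⟩ | ⟨h1, h2⟩
              · exact h2
              · exact absurd (hAδ.symm.trans h1) (hne₀ δ hnd)
            rw [swapCells_apply_not_mem hnotin, swapCells_apply_not_mem hnotin]
            exact ⟨hAδ.symm, hBδ.symm⟩
      · have hnotin : δ ∉ gSet d Γ v := not_mem_gSet_not_nd hcomp (fun hh => hnd hh) v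
        obtain ⟨w, hw⟩ := degen_exists hdeg hnd
        obtain ⟨e1, e2⟩ := degen_val hcov hnn hw
        obtain ⟨e3, e4⟩ := degen_val hcov hn₀ hw
        rw [swapCells_apply_not_mem hnotin, swapCells_apply_not_mem hnotin]
        exact ⟨e3.trans e1.symm, e4.trans e2.symm⟩
    have g1 : swapCells I (gSet d Γ v) lev0 lev1 i₀ = i := funext fun δ => (goal1 δ).1
    have g2 : swapCells I (gSet d Γ v) lev0 lev1 j₀ = j := funext fun δ => (goal1 δ).2
    rw [g1, g2]
  obtain ⟨i, j, hpair⟩ := exists_pairTbl (hdeg n hn)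
  have hnn : pairTbl I i j ∈ fiber I 𝒟 n₀ := hpair ▸ hn
  have hnd0 : Nondegenerate I n₀ (pick 0) := hndΓ 0 _ (hpick 0)
  have agree0 : (i (pick 0) = i₀ (pick 0)) ∨ (i (pick 0) = j₀ (pick 0)) := by
    rcases struct1 hcov hlev hnn hnd0 with ⟨h1, h2⟩ | ⟨h1, h2⟩ <;>
      rcases struct1 hcov hlev hn₀ hnd0 with ⟨h3, h4⟩ | ⟨h3, h4⟩
    · exact Or.inl (h1.trans h3.symm)
    · exact Or.inr (h1.trans h4.symm)
    · exact Or.inr (h1.trans h4.symm)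
    · exact Or.inl (h1.trans h3.symm)
  rcases agree0 with hA | hB
  · obtain ⟨v, hv⟩ := main i j hnn hA
    exact ⟨v, hpair.trans hv⟩
  · have hnn' : pairTbl I j i ∈ fiber I 𝒟 n₀ := by rw [pairTbl_comm]; exact hnn
    have hA' : j (pick 0) = i₀ (pick 0) := by
      rcases struct1 hcov hlev hnn hnd0 with ⟨h1, h2⟩ | ⟨h1, h2⟩ <;>
        rcases struct1 hcov hlev hn₀ hnd0 with ⟨h3, h4⟩ | ⟨h3, h4⟩
      · exact absurd ((h1.trans h3.symm).symm.trans hB) (hne₀ _ hnd0)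
      · exact h2.trans h3.symm
      · exact h2.trans h3.symm
      · exact absurd ((h1.trans h3.symm).symm.trans hB) (hne₀ _ hnd0)
    obtain ⟨v, hv⟩ := main j i hnn' hA'
    refine ⟨v, ?_⟩
    rw [hpair, pairTbl_comm]
    exact hv
  
end Fiber2
lemma bitstep {jj l : ℕ} (h1 : 1 ≤ l) (h2 : l ≤ 2 ^ jj) (b : ℕ) :
    (l + 2 ^ jj - 1).testBit b = (if b = jj then true else (l - 1).testBit b) := by
  have hrw : l + 2 ^ jj - 1 = 2 ^ jj + (l - 1) := by omega
  have hlt : l - 1 < 2 ^ jj := by omega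
  rw [hrw]
  rcases lt_trichotomy b jj with hb | hb | hb
  · rw [Nat.testBit_two_pow_add_gt hb, if_neg (by omega)]
  · subst hb
    rw [Nat.testBit_two_pow_add_eq, if_pos rfl, Nat.testBit_eq_false_of_lt hlt]
    rfl
  · have hbig : 2 ^ jj + (l - 1) < 2 ^ b := by
      have : 2 ^ (jj + 1) ≤ 2 ^ b := Nat.pow_le_pow_right (by norm_num) (by omega)
      have hp : 2 ^ (jj + 1) = 2 ^ jj * 2 := pow_succ 2 jj
      omega
    rw [Nat.testBit_eq_false_of_lt hbig, if_neg (by omega),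
      Nat.testBit_eq_false_of_lt (by omega)]
/-- Theorem 8, Algorithm 1: given a basis `{v_2, …, v_c}` of `GF(2)^{c-1}`
(with `c = d + 1` the number of connected components of `G(Δ̄_b)`), the level-swapping
maps `g^k` map `F_b` bijectively onto itself, and the recursively defined tables
`n_1, …, n_{2^{c-1}}` are pairwise distinct and enumerate `F_b`, while the moves
`M_b^* = {z_2, …, z_{2^{c-1}}}` form a set of `2^{c-1} - 1 = |F_b| - 1` moves connecting
`F_b`, hence a minimal set of moves connecting `F_b`. -/
theorem statement14 (I : Fin m → ℕ) (hI : ∀ δ, 2 ≤ I δ)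
    (𝒟 : Finset (Finset (Fin m))) (hcov : ∀ δ : Fin m, ∃ D ∈ 𝒟, δ ∈ D)
    (n₀ : Cell I → ℕ) (hdeg : ∀ n ∈ fiber I 𝒟 n₀, total I n = 2)
    (d : ℕ) (Γ : Fin (d + 1) → Set (Fin m)) (hcomp : IsComponents I 𝒟 n₀ d Γ)
    (lev0 lev1 : ∀ δ : Fin m, Fin (I δ))
    (hlev : ∀ δ, Nondegenerate I n₀ δ → lev0 δ ≠ lev1 δ ∧
      margin1 I n₀ δ (lev0 δ) = 1 ∧ margin1 I n₀ δ (lev1 δ) = 1)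
    (vs : Module.Basis (Fin d) (ZMod 2) (Fin d → ZMod 2))
    (nseq : ℕ → (Cell I → ℕ)) (zseq : ℕ → (Cell I → ℤ))
    (hn1 : nseq 1 ∈ fiber I 𝒟 n₀)
    (hrec : ∀ k : ℕ, ∀ (hk2 : 2 ≤ k) (hkc : k ≤ d + 1), ∀ l : ℕ,
      1 ≤ l → l ≤ 2 ^ (k - 2) →
      nseq (l + 2 ^ (k - 2)) =
        actSwap I (gSet d Γ (vs ⟨k - 2, by omega⟩)) lev0 lev1 (nseq l) ∧
      zseq (l + 2 ^ (k - 2)) =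
        tblZ I (nseq l) - tblZ I (nseq (l + 2 ^ (k - 2)))) :
    (∀ j : Fin d,
      Set.BijOn (actSwap I (gSet d Γ (vs j)) lev0 lev1)
        (fiber I 𝒟 n₀) (fiber I 𝒟 n₀)) ∧
    (∀ t t' : ℕ, 1 ≤ t → t ≤ 2 ^ d → 1 ≤ t' → t' ≤ 2 ^ d → t ≠ t' →
      nseq t ≠ nseq t') ∧
    fiber I 𝒟 n₀ = nseq '' Set.Icc 1 (2 ^ d) ∧
    Connects I {w | ∃ t : ℕ, 2 ≤ t ∧ t ≤ 2 ^ d ∧ w = zseq t} (fiber I 𝒟 n₀) ∧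
    ({w | ∃ t : ℕ, 2 ≤ t ∧ t ≤ 2 ^ d ∧ w = zseq t} : Set (Cell I → ℤ)).ncard =
      2 ^ d - 1 ∧
    ∀ N ⊂ ({w | ∃ t : ℕ, 2 ≤ t ∧ t ≤ 2 ^ d ∧ w = zseq t} : Set (Cell I → ℤ)),
      ¬ Connects I N (fiber I 𝒟 n₀) := by
  classical
  -- Part 1 : bijectivity of the swap maps
  have hbij : ∀ j : Fin d,
      Set.BijOn (actSwap I (gSet d Γ (vs j)) lev0 lev1) (fiber I 𝒟 n₀) (fiber I 𝒟 n₀) := by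
    intro j
    refine ⟨fun n hn => actSwap_mem_fiber hdeg hcov hlev hcomp (vs j) hn, ?_, ?_⟩
    · intro a _ b _ h
      have := congrArg (actSwap I (gSet d Γ (vs j)) lev0 lev1) h
      rwa [actSwap_invol, actSwap_invol] at this
    · intro y hy
      exact ⟨actSwap I (gSet d Γ (vs j)) lev0 lev1 y,
        actSwap_mem_fiber hdeg hcov hlev hcomp (vs j) hy, actSwap_invol _ y⟩
  -- coordinates
  set cseq : ℕ → (Fin d → ZMod 2) :=
    fun t j => if Nat.testBit (t - 1) (j : ℕ) then 1 else 0 with hcseq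
  set V : ℕ → (Fin d → ZMod 2) := fun t => vs.equivFun.symm (cseq t) with hV
  have hgSet0 : ∀ n : Cell I → ℕ, actSwap I (gSet d Γ (0 : Fin d → ZMod 2)) lev0 lev1 n = n := by
    intro n
    have hnm : ∀ δ, δ ∉ gSet d Γ (0 : Fin d → ZMod 2) := by
      intro δ h
      obtain ⟨l, h1, -⟩ := mem_gSet_iff.mp h
      rw [Pi.zero_apply] at h1
      exact absurd h1 (by decide)
    funext x
    show n (swapCells I (gSet d Γ (0 : Fin d → ZMod 2)) lev0 lev1 x) = n x
    congr 1
    funext δ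
    exact swapCells_apply_not_mem (hnm δ) x
  have hsingle : ∀ jj : Fin d,
      vs.equivFun.symm (fun j' => if j' = jj then 1 else 0) = vs jj := by
    intro jj
    rw [Module.Basis.equivFun_symm_apply]
    simp [ite_smul]
  -- decomposition of indices t ≥ 2
  have hdecomp : ∀ t, 2 ≤ t → t ≤ 2 ^ d → ∃ jj : Fin d, ∃ l, 1 ≤ l ∧ l ≤ 2 ^ (jj : ℕ) ∧
      t = l + 2 ^ (jj : ℕ) ∧
      nseq t = actSwap I (gSet d Γ (vs jj)) lev0 lev1 (nseq l) ∧
      zseq t = tblZ I (nseq l) - tblZ I (nseq t) := by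
    intro t h2 hle
    set j := Nat.log 2 (t - 1) with hj
    have hj1 : 2 ^ j ≤ t - 1 := Nat.pow_log_le_self 2 (by omega)
    have hj2 : t - 1 < 2 ^ (j + 1) := Nat.lt_pow_succ_log_self (by norm_num) _
    have hjp : 2 ^ (j + 1) = 2 ^ j * 2 := pow_succ 2 j
    have hjd : j < d := by
      by_contra hc
      push_neg at hc
      have := Nat.pow_le_pow_right (show 1 ≤ 2 by norm_num) hc
      omega
    have hrec' := hrec (j + 2) (by omega) (by omega) (t - 2 ^ j) (by omega)
      (by simp only [Nat.add_sub_cancel]; omega)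
    simp only [Nat.add_sub_cancel] at hrec'
    rw [show t - 2 ^ j + 2 ^ j = t from by omega] at hrec'
    have hvm : (((⟨j, hjd⟩ : Fin d)) : ℕ) = j := rfl
    exact ⟨⟨j, hjd⟩, t - 2 ^ j, by omega, by rw [hvm]; omega, by rw [hvm]; omega,
      hrec'.1, hrec'.2⟩
  -- the orbit description of nseq
  have hVrec : ∀ t, 1 ≤ t → t ≤ 2 ^ d →
      nseq t = actSwap I (gSet d Γ (V t)) lev0 lev1 (nseq 1) := by
    intro t
    induction t using Nat.strong_induction_on with
    | _ t ih =>
      intro h1 h2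
      rcases eq_or_lt_of_le h1 with heq | hlt
      · subst heq
        have hc0 : cseq 1 = 0 := by
          funext j'
          simp [hcseq, Nat.zero_testBit]
        rw [hV]
        simp only
        rw [hc0, map_zero, hgSet0]
      · obtain ⟨jj, l, hl1, hl2, ht, hact, -⟩ := hdecomp t (by omega) h2
        have hlt' : l < t := by
          have : 1 ≤ 2 ^ (jj : ℕ) := Nat.one_le_two_pow
          omega
        have hl2d : l ≤ 2 ^ d := le_trans hl2 (Nat.pow_le_pow_right (by norm_num) (le_of_lt jj.isLt))
        have ihl := ih l hlt' hl1 hl2d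
        have hcadd : cseq t = (fun j' => if j' = jj then 1 else 0) + cseq l := by
          funext j'
          have hb := bitstep hl1 hl2 (j' : ℕ)
          rw [← ht] at hb
          have hfin : ((j' : ℕ) = (jj : ℕ)) ↔ (j' = jj) := Fin.val_inj
          by_cases hjj : j' = jj
          · have hlow : (l - 1).testBit (jj : ℕ) = false :=
              Nat.testBit_eq_false_of_lt (by omega)
            subst hjj
            simp [hcseq, hb, hlow, Pi.add_apply]
          · have : ¬ ((j' : ℕ) = (jj : ℕ)) := fun hh => hjj (hfin.mp hh)
            simp [hcseq, hb, this, hjj, Pi.add_apply]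
        have hVadd : V t = vs jj + V l := by
          rw [hV]
          simp only
          rw [hcadd, map_add, hsingle]
        rw [hVadd, actSwap_add hcomp, ← ihl, ← hact]
  have hmemF : ∀ t, 1 ≤ t → t ≤ 2 ^ d → nseq t ∈ fiber I 𝒟 n₀ := by
    intro t h1 h2
    rw [hVrec t h1 h2]
    exact actSwap_mem_fiber hdeg hcov hlev hcomp _ hn1
  -- injectivity of nseq
  have hnseq_inj : ∀ t t' : ℕ, 1 ≤ t → t ≤ 2 ^ d → 1 ≤ t' → t' ≤ 2 ^ d → t ≠ t' →
      nseq t ≠ nseq t' := by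
    intro t t' h1 h2 h1' h2' hne
    have hcne : cseq t ≠ cseq t' := by
      intro hc
      apply hne
      have hbits : ∀ b, (t - 1).testBit b = (t' - 1).testBit b := by
        intro b
        by_cases hb : b < d
        · have hco := congrFun hc ⟨b, hb⟩
          simp only [hcseq] at hco
          by_cases ht : (t - 1).testBit b = true <;> by_cases ht' : (t' - 1).testBit b = true
          · rw [ht, ht']
          · rw [if_pos ht, if_neg ht'] at hco
            exact absurd hco (by decide)
          · rw [if_neg ht, if_pos ht'] at hco
            exact absurd hco (by decide)
          · rw [Bool.not_eq_true] at ht ht'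
            rw [ht, ht']
        · push_neg at hb
          have hbb : (2 : ℕ) ^ d ≤ 2 ^ b := Nat.pow_le_pow_right (by norm_num) hb
          rw [Nat.testBit_eq_false_of_lt (by omega), Nat.testBit_eq_false_of_lt (by omega)]
      have := Nat.eq_of_testBit_eq hbits
      omega
    have hVne : V t ≠ V t' := fun h => hcne (vs.equivFun.symm.injective h)
    rw [hVrec t h1 h2, hVrec t' h1' h2']
    exact orbit_inj hdeg hcov hlev hcomp hn1 hVne
  -- the fiber is the image of nseq
  have hcard2 : Fintype.card (Fin d → ZMod 2) = 2 ^ d := by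
    rw [Fintype.card_fun]
    simp
  have hFsub : fiber I 𝒟 n₀ ⊆
      (fun u : Fin d → ZMod 2 => actSwap I (gSet d Γ u) lev0 lev1 (nseq 1)) '' Set.univ := by
    intro n hn
    obtain ⟨v, hv⟩ := fiber_orbit hdeg hcov hlev hcomp hn
    obtain ⟨v₁, hv₁⟩ := fiber_orbit hdeg hcov hlev hcomp hn1
    refine ⟨v + v₁, Set.mem_univ _, ?_⟩
    have h₀ : n₀ = actSwap I (gSet d Γ v₁) lev0 lev1 (nseq 1) := by
      rw [hv₁, actSwap_invol]
    show actSwap I (gSet d Γ (v + v₁)) lev0 lev1 (nseq 1) = n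
    rw [actSwap_add hcomp, ← h₀, ← hv]
  have hFfin : (fiber I 𝒟 n₀).Finite :=
    Set.Finite.subset (Set.Finite.image _ Set.finite_univ) hFsub
  have hinjOn : Set.InjOn nseq (Set.Icc 1 (2 ^ d)) := by
    intro t ht t' ht' h
    by_contra hne
    exact hnseq_inj t t' ht.1 ht.2 ht'.1 ht'.2 hne h
  have himgcard : (nseq '' Set.Icc 1 (2 ^ d)).ncard = 2 ^ d := by
    rw [Set.ncard_image_of_injOn hinjOn, ← Finset.coe_Icc, Set.ncard_coe_finset, Nat.card_Icc]
    omega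
  have hFcard : (fiber I 𝒟 n₀).ncard ≤ 2 ^ d := by
    refine le_trans (Set.ncard_le_ncard hFsub (Set.Finite.image _ Set.finite_univ)) ?_
    refine le_trans (Set.ncard_image_le Set.finite_univ) ?_
    rw [Set.ncard_univ, Nat.card_eq_fintype_card, hcard2]
  have hsub : nseq '' Set.Icc 1 (2 ^ d) ⊆ fiber I 𝒟 n₀ := by
    rintro _ ⟨t, ⟨ht1, ht2⟩, rfl⟩
    exact hmemF t ht1 ht2
  have himage : fiber I 𝒟 n₀ = nseq '' Set.Icc 1 (2 ^ d) :=
    (Set.eq_of_subset_of_ncard_le hsub (by rw [himgcard]; exact hFcard) hFfin).symm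
  -- decomposition with disjoint supports
  have hstep : ∀ t, 2 ≤ t → t ≤ 2 ^ d → ∃ jj : Fin d, ∃ l, 1 ≤ l ∧ l ≤ 2 ^ (jj : ℕ) ∧
      t = l + 2 ^ (jj : ℕ) ∧ zseq t = tblZ I (nseq l) - tblZ I (nseq t) ∧
      (∀ x, nseq l x = 0 ∨ nseq t x = 0) := by
    intro t h2 hle
    obtain ⟨jj, l, hl1, hl2, ht, hact, hz⟩ := hdecomp t h2 hle
    have hl2d : l ≤ 2 ^ d :=
      le_trans hl2 (Nat.pow_le_pow_right (by norm_num) (le_of_lt jj.isLt))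
    have hvsne : vs jj ≠ (0 : Fin d → ZMod 2) := vs.ne_zero jj
    have hdis := support_disj hdeg hcov hlev hcomp (hmemF l hl1 hl2d) hvsne
    refine ⟨jj, l, hl1, hl2, ht, hz, fun x => ?_⟩
    rcases hdis x with h | h
    · exact Or.inl h
    · right; rw [hact]; exact h
  have hrecov : ∀ t, 2 ≤ t → t ≤ 2 ^ d → ∀ x, nseq t x = (-(zseq t x)).toNat := by
    intro t h2 hle x
    obtain ⟨jj, l, hl1, hl2, ht, hz, hdis⟩ := hstep t h2 hle
    have hzx := congrFun hz x
    simp only [Pi.sub_apply, tblZ] at hzx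
    rcases hdis x with h | h <;> omega
  have hzinj : Set.InjOn zseq (Set.Icc 2 (2 ^ d)) := by
    intro t ht t' ht' h
    rw [Set.mem_Icc] at ht ht'
    by_contra hne
    apply hnseq_inj t t' (by omega) ht.2 (by omega) ht'.2 hne
    funext x
    rw [hrecov t ht.1 ht.2 x, hrecov t' ht'.1 ht'.2 x, h]
  have hMeq : {w | ∃ t : ℕ, 2 ≤ t ∧ t ≤ 2 ^ d ∧ w = zseq t} = zseq '' Set.Icc 2 (2 ^ d) := by
    ext w
    constructor
    · rintro ⟨t, h1, h2, rfl⟩; exact ⟨t, ⟨h1, h2⟩, rfl⟩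
    · rintro ⟨t, ⟨h1, h2⟩, rfl⟩; exact ⟨t, h1, h2, rfl⟩
  have hncard : ({w | ∃ t : ℕ, 2 ≤ t ∧ t ≤ 2 ^ d ∧ w = zseq t} :
      Set (Cell I → ℤ)).ncard = 2 ^ d - 1 := by
    rw [hMeq, Set.ncard_image_of_injOn hzinj, ← Finset.coe_Icc, Set.ncard_coe_finset,
      Nat.card_Icc]
    omega
  -- connectivity
  have hstay : ∀ (M' : Set (Cell I → ℤ)) (a b : Cell I → ℕ), a ∈ fiber I 𝒟 n₀ →
      Relation.ReflTransGen (MStep I M' (fiber I 𝒟 n₀)) a b → b ∈ fiber I 𝒟 n₀ := by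
    intro M' a b ha h
    induction h with
    | refl => exact ha
    | tail p st ih => exact st.1
  have hrev : ∀ (M' : Set (Cell I → ℤ)) (a b : Cell I → ℕ), a ∈ fiber I 𝒟 n₀ →
      Relation.ReflTransGen (MStep I M' (fiber I 𝒟 n₀)) a b →
      Relation.ReflTransGen (MStep I M' (fiber I 𝒟 n₀)) b a := by
    intro M' a b ha h
    induction h with
    | refl => exact Relation.ReflTransGen.refl
    | @tail c b' p st ih =>
      exact Relation.ReflTransGen.head ⟨hstay M' a c ha p, st.2.symm⟩ ih
  have hkey : ∀ t, 1 ≤ t → t ≤ 2 ^ d →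
      Relation.ReflTransGen
        (MStep I {w | ∃ t : ℕ, 2 ≤ t ∧ t ≤ 2 ^ d ∧ w = zseq t} (fiber I 𝒟 n₀))
        (nseq t) (nseq 1) := by
    intro t
    induction t using Nat.strong_induction_on with
    | _ t ih =>
      intro h1 h2
      rcases eq_or_lt_of_le h1 with heq | hlt
      · rw [← heq]
      · obtain ⟨jj, l, hl1, hl2, ht, hz, -⟩ := hstep t (by omega) h2
        have hl2d : l ≤ 2 ^ d :=
          le_trans hl2 (Nat.pow_le_pow_right (by norm_num) (le_of_lt jj.isLt))
        have honep : (1:ℕ) ≤ 2 ^ (jj : ℕ) := Nat.one_le_two_pow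
        have hstep1 : MStep I {w | ∃ t : ℕ, 2 ≤ t ∧ t ≤ 2 ^ d ∧ w = zseq t}
            (fiber I 𝒟 n₀) (nseq t) (nseq l) :=
          ⟨hmemF l hl1 hl2d, Or.inl ⟨t, by omega, h2, hz.symm⟩⟩
        exact Relation.ReflTransGen.head hstep1 (ih l (by omega) hl1 hl2d)
  have hconn : Connects I {w | ∃ t : ℕ, 2 ≤ t ∧ t ≤ 2 ^ d ∧ w = zseq t}
      (fiber I 𝒟 n₀) := by
    intro n hn n' hn'
    rw [himage] at hn hn'
    obtain ⟨t, ⟨ht1, ht2⟩, rfl⟩ := hn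
    obtain ⟨t', ⟨ht1', ht2'⟩, rfl⟩ := hn'
    exact (hkey t ht1 ht2).trans
      (hrev _ _ _ (hmemF t' ht1' ht2') (hkey t' ht1' ht2'))
  -- minimality
  have hmin : ∀ N ⊂ ({w | ∃ t : ℕ, 2 ≤ t ∧ t ≤ 2 ^ d ∧ w = zseq t} : Set (Cell I → ℤ)),
      ¬ Connects I N (fiber I 𝒟 n₀) := by
    intro N hN hCon
    obtain ⟨w0, hw0M, hw0N⟩ := Set.exists_of_ssubset hN
    obtain ⟨t₀, ht₀1, ht₀2, hw0⟩ := hw0M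
    obtain ⟨j₀, l₀, hl₀1, hl₀2, ht₀, -, -⟩ := hstep t₀ ht₀1 ht₀2
    have hp0 : (2:ℕ) ^ ((j₀:ℕ)+1) = 2 ^ (j₀:ℕ) * 2 := pow_succ 2 _
    have hone : (1:ℕ) ≤ 2 ^ (j₀:ℕ) := Nat.one_le_two_pow
    set Q : (Cell I → ℕ) → Prop := fun n => ∃ t, 1 ≤ t ∧ t ≤ 2 ^ d ∧
      (t - 1) % 2 ^ ((j₀:ℕ) + 1) = t₀ - 1 ∧ n = nseq t with hQdef
    have hnum : ∀ (jj : Fin d) (l s : ℕ), 1 ≤ l → l ≤ 2 ^ (jj:ℕ) → s = l + 2 ^ (jj:ℕ) →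
        s ≠ t₀ →
        (((l - 1) % 2 ^ ((j₀:ℕ) + 1) = t₀ - 1) ↔
          ((s - 1) % 2 ^ ((j₀:ℕ) + 1) = t₀ - 1)) := by
      intro jj l s hl1 hl2 hs hne
      have hpj : (2:ℕ) ^ ((jj:ℕ)+1) = 2 ^ (jj:ℕ) * 2 := pow_succ 2 _
      rcases lt_trichotomy (jj:ℕ) (j₀:ℕ) with hcmp | hcmp | hcmp
      · have hmono : (2:ℕ) ^ ((jj:ℕ)+1) ≤ 2 ^ (j₀:ℕ) :=
          Nat.pow_le_pow_right (by norm_num) (by omega)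
        have e1 : (s - 1) % 2 ^ ((j₀:ℕ)+1) = s - 1 := Nat.mod_eq_of_lt (by omega)
        have e2 : (l - 1) % 2 ^ ((j₀:ℕ)+1) = l - 1 := Nat.mod_eq_of_lt (by omega)
        rw [e1, e2]
        constructor <;> intro h <;> omega
      · have hpow_eq : (2:ℕ) ^ (jj:ℕ) = 2 ^ (j₀:ℕ) := by rw [hcmp]
        have e1 : (s - 1) % 2 ^ ((j₀:ℕ)+1) = s - 1 := Nat.mod_eq_of_lt (by omega)
        have e2 : (l - 1) % 2 ^ ((j₀:ℕ)+1) = l - 1 := Nat.mod_eq_of_lt (by omega)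
        rw [e1, e2]
        constructor <;> intro h <;> omega
      · have hdvd : (2:ℕ) ^ (jj:ℕ) = 2 ^ ((j₀:ℕ)+1) * 2 ^ ((jj:ℕ) - ((j₀:ℕ)+1)) := by
          rw [← pow_add]
          congr 1
          omega
        have hs1 : s - 1 = (l - 1) + 2 ^ ((j₀:ℕ)+1) * 2 ^ ((jj:ℕ) - ((j₀:ℕ)+1)) := by
          omega
        rw [hs1, Nat.add_mul_mod_self_left]
    have hpair : ∀ s, 2 ≤ s → s ≤ 2 ^ d → ∀ a b, a ∈ fiber I 𝒟 n₀ → b ∈ fiber I 𝒟 n₀ →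
        tblZ I a - tblZ I b = zseq s →
        ∃ jj : Fin d, ∃ l, 1 ≤ l ∧ l ≤ 2 ^ (jj:ℕ) ∧ s = l + 2 ^ (jj:ℕ) ∧
          a = nseq l ∧ b = nseq s := by
      intro s h2 hle a b ha hb heq
      obtain ⟨jj, l, hl1, hl2, hs, hz, hdis⟩ := hstep s h2 hle
      have hl2d : l ≤ 2 ^ d :=
        le_trans hl2 (Nat.pow_le_pow_right (by norm_num) (le_of_lt jj.isLt))
      have hles : ∀ x, nseq l x ≤ a x := by
        intro x
        have h1 := congrFun heq x
        have h2x := congrFun hz x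
        simp only [Pi.sub_apply, tblZ] at h1 h2x
        rcases hdis x with h | h <;> omega
      have hsum : ∑ x : Cell I, nseq l x = ∑ x : Cell I, a x := by
        have e1 := hdeg a ha
        have e2 := hdeg (nseq l) (hmemF l hl1 hl2d)
        unfold total at e1 e2
        omega
      have ha' : a = nseq l := by
        funext x
        exact ((Finset.sum_eq_sum_iff_of_le (fun x _ => hles x)).mp hsum x
          (Finset.mem_univ x)).symm
      have hb' : b = nseq s := by
        funext x
        have h1 := congrFun heq x
        have h2x := congrFun hz x
        have h3 := congrFun ha' x
        simp only [Pi.sub_apply, tblZ] at h1 h2x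
        omega
      exact ⟨jj, l, hl1, hl2, hs, ha', hb'⟩
    have hQiff : ∀ u, 1 ≤ u → u ≤ 2 ^ d →
        (Q (nseq u) ↔ (u - 1) % 2 ^ ((j₀:ℕ)+1) = t₀ - 1) := by
      intro u h1 h2
      constructor
      · rintro ⟨t, ht1, ht2, hT, hEq⟩
        have hut : u = t := by
          by_contra hne
          exact hnseq_inj u t h1 h2 ht1 ht2 hne hEq
        rw [hut]
        exact hT
      · intro hT
        exact ⟨u, h1, h2, hT, rfl⟩
    have hQ1 : ¬ Q (nseq 1) := by
      intro h
      have := (hQiff 1 (le_refl 1) Nat.one_le_two_pow).mp h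
      rw [Nat.sub_self, Nat.zero_mod] at this
      omega
    have hQt₀ : Q (nseq t₀) := by
      refine (hQiff t₀ (by omega) ht₀2).mpr ?_
      exact Nat.mod_eq_of_lt (by omega)
    have hinv : ∀ b, Relation.ReflTransGen (MStep I N (fiber I 𝒟 n₀)) (nseq 1) b →
        b ∈ fiber I 𝒟 n₀ ∧ ¬ Q b := by
      intro b hb
      induction hb with
      | refl => exact ⟨hmemF 1 (le_refl 1) Nat.one_le_two_pow, hQ1⟩
      | @tail c b' p st ih =>
        refine ⟨st.1, ?_⟩
        intro hQb
        apply ih.2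
        rcases st.2 with hmv | hmv
        · obtain ⟨s, hs2, hsle, hseq⟩ := hN.subset hmv
          have hsne : s ≠ t₀ := by
            intro hco
            apply hw0N
            rw [hw0, ← hco, ← hseq]
            exact hmv
          obtain ⟨jj, l, hl1, hl2, hs, hb'eq, hceq⟩ :=
            hpair s hs2 hsle b' c st.1 ih.1 hseq
          have hl2d : l ≤ 2 ^ d :=
            le_trans hl2 (Nat.pow_le_pow_right (by norm_num) (le_of_lt jj.isLt))
          have hTl := (hQiff l hl1 hl2d).mp (hb'eq ▸ hQb)
          have hTs := (hnum jj l s hl1 hl2 hs hsne).mp hTl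
          rw [hceq]
          exact (hQiff s (by omega) hsle).mpr hTs
        · obtain ⟨s, hs2, hsle, hseq⟩ := hN.subset hmv
          have hsne : s ≠ t₀ := by
            intro hco
            apply hw0N
            rw [hw0, ← hco, ← hseq]
            exact hmv
          obtain ⟨jj, l, hl1, hl2, hs, hceq, hb'eq⟩ :=
            hpair s hs2 hsle c b' ih.1 st.1 hseq
          have hl2d : l ≤ 2 ^ d :=
            le_trans hl2 (Nat.pow_le_pow_right (by norm_num) (le_of_lt jj.isLt))
          have hTs := (hQiff s (by omega) hsle).mp (hb'eq ▸ hQb)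
          have hTl := (hnum jj l s hl1 hl2 hs hsne).mpr hTs
          rw [hceq]
          exact (hQiff l hl1 hl2d).mpr hTl
    exact (hinv (nseq t₀)
      (hCon (nseq 1) (hmemF 1 (le_refl 1) Nat.one_le_two_pow)
        (nseq t₀) (hmemF t₀ (by omega) ht₀2))).2 hQt₀
  exact ⟨hbij, hnseq_inj, himage, hconn, hncard, hmin⟩
end

section
/- Let G be a finite simple graph, let D and D′ be two distinct boundary cliques of G, and let D″ be a maximal clique of G with D″ ⊄ D ∪ D′. Then for any u ∈ D″ ∖ (D ∪ D′), any s ∈ Simp(D) and any s′ ∈ Simp(D′), the three vertices u, s, s′ are distinct and pairwise non-adjacent; consequently the induced subgraph of G on (D″ ∖ (D ∪ D′)) ∪ Simp(D) ∪ Simp(D′) has exactly three connected components. -/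
/-!
A simplicial vertex `s` of a maximal clique `D` has all its neighbours in `D` (otherwise `D` could
be enlarged), so `D` is the only maximal clique containing `s`. Hence a simplicial vertex of `D` is
distinct from and non-adjacent to every vertex outside `D`; in particular `Simp(D)`, `Simp(D')` and
`D'' ∖ (D ∪ D')` are three nonempty cliques with no vertex and no edge in common, and each of them
is one connected component of the induced subgraph on their union.
-/

/-- A maximal clique of a graph (as a finite vertex set). -/
def IsMaxClique {V : Type*} (G : SimpleGraph V) (D : Finset V) : Prop :=
  G.IsClique ↑D ∧ ∀ E : Finset V, G.IsClique ↑E → D ⊆ E → D = E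

/-- A vertex is simplicial if its neighbourhood is a clique. -/
def IsSimplicialVertex {V : Type*} (G : SimpleGraph V) (v : V) : Prop :=
  G.IsClique (G.neighborSet v)

/-- `Simp(D)`: the set of simplicial vertices contained in `D`. -/
def SimpSet {V : Type*} (G : SimpleGraph V) (D : Finset V) : Set V :=
  {v | v ∈ D ∧ IsSimplicialVertex G v}

/-- A boundary clique: a maximal clique `D` with `Simp(D) ≠ ∅` such that
`Sep(D) = D ∖ Simp(D)` equals `D ∩ D'` for some other maximal clique `D'`. -/
def IsBoundaryClique {V : Type*} (G : SimpleGraph V) (D : Finset V) : Prop :=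
  IsMaxClique G D ∧ (SimpSet G D).Nonempty ∧
    ∃ D' : Finset V, IsMaxClique G D' ∧ D' ≠ D ∧
      ((↑D : Set V) \ SimpSet G D) = (↑D : Set V) ∩ ↑D'

namespace SimpleGraph

variable {V : Type*}

theorem card_connectedComponent_induce_iUnion_cliques {ι : Type*} (G : SimpleGraph V)
    (A : ι → Set V) (hclique : ∀ i, G.IsClique (A i)) (hne : ∀ i, (A i).Nonempty)
    (hsep : Pairwise fun i j => ∀ x ∈ A i, ∀ y ∈ A j, x ≠ y ∧ ¬ G.Adj x y) :
    Nat.card (G.induce (⋃ i, A i)).ConnectedComponent = Nat.card ι := by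
  set H := G.induce (⋃ i, A i)
  have hpiece : ∀ x : ↥(⋃ i, A i), ∃ i, (x : V) ∈ A i := fun x => Set.mem_iUnion.mp x.2
  choose piece hpiece using hpiece
  have piece_eq : ∀ (x : ↥(⋃ i, A i)) i, (x : V) ∈ A i → piece x = i := fun x i hx => by
    by_contra h
    exact (hsep h (x : V) (hpiece x) x hx).1 rfl
  have piece_eq_of_adj : ∀ x y : ↥(⋃ i, A i), H.Adj x y → piece x = piece y := fun x y hxy => by
    by_contra h
    exact (hsep h _ (hpiece x) _ (hpiece y)).2 hxy
  have piece_eq_of_walk : ∀ x y (p : H.Walk x y), piece x = piece y := by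
    intro x y p
    induction p with
    | nil => rfl
    | cons h _ ih => exact (piece_eq_of_adj _ _ h).trans ih
  refine Nat.card_eq_of_bijective
    (ConnectedComponent.lift piece fun x y p _ => piece_eq_of_walk x y p) ⟨?_, ?_⟩
  · refine ConnectedComponent.ind₂ fun x y (h : piece x = piece y) => ?_
    rw [ConnectedComponent.eq]
    by_cases hxy : x = y
    · rw [hxy]
    · refine Adj.reachable (hclique (piece y) (h ▸ hpiece x) (hpiece y) ?_)
      exact fun h' => hxy (Subtype.ext h')
  · intro i
    obtain ⟨x, hx⟩ := hne i
    exact ⟨H.connectedComponentMk ⟨x, Set.mem_iUnion.mpr ⟨i, hx⟩⟩, piece_eq _ i hx⟩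

theorem card_connectedComponent_induce_union_union_cliques (G : SimpleGraph V) {A B C : Set V}
    (hA : G.IsClique A) (hB : G.IsClique B) (hC : G.IsClique C)
    (hA₀ : A.Nonempty) (hB₀ : B.Nonempty) (hC₀ : C.Nonempty)
    (hAB : ∀ x ∈ A, ∀ y ∈ B, x ≠ y ∧ ¬ G.Adj x y) (hAC : ∀ x ∈ A, ∀ y ∈ C, x ≠ y ∧ ¬ G.Adj x y)
    (hBC : ∀ x ∈ B, ∀ y ∈ C, x ≠ y ∧ ¬ G.Adj x y) :
    Nat.card (G.induce (A ∪ B ∪ C)).ConnectedComponent = 3 := by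
  have hunion : A ∪ B ∪ C = ⋃ i, ![A, B, C] i := by
    ext
    simp [Fin.exists_fin_succ, or_assoc]
  have swap : ∀ {x y : V}, x ≠ y ∧ ¬ G.Adj x y → y ≠ x ∧ ¬ G.Adj y x :=
    fun h => ⟨h.1.symm, fun h' => h.2 h'.symm⟩
  rw [hunion, card_connectedComponent_induce_iUnion_cliques, Nat.card_eq_fintype_card,
    Fintype.card_fin]
  · intro i
    fin_cases i <;> assumption
  · intro i
    fin_cases i <;> assumption
  · intro i j hij x hx y hy
    fin_cases i <;> fin_cases j
    all_goals first
      | exact absurd rfl hij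
      | exact hAB x hx y hy | exact hAC x hx y hy | exact hBC x hx y hy
      | exact swap (hAB y hy x hx) | exact swap (hAC y hy x hx) | exact swap (hBC y hy x hx)

end SimpleGraph

section SimplicialVertices

variable {V : Type*} {G : SimpleGraph V} {D E : Finset V} {s v : V}

theorem IsMaxClique.mem_of_adj_simplicial [DecidableEq V] (hD : IsMaxClique G D)
    (hs : s ∈ SimpSet G D) (hadj : G.Adj s v) : v ∈ D := by
  have hsD : ∀ w ∈ D, w ≠ s → G.Adj s w := fun w hw hws =>
    hD.1 (Finset.mem_coe.mpr hs.1) (Finset.mem_coe.mpr hw) hws.symm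
  have hclique : G.IsClique ↑(insert v D) := by
    rw [Finset.coe_insert]
    refine hD.1.insert fun w hw hvw => ?_
    by_cases hws : w = s
    · exact hws ▸ hadj.symm
    · exact hs.2 hadj (hsD w hw hws) hvw
  rw [hD.2 _ hclique (Finset.subset_insert v D)]
  exact Finset.mem_insert_self v D

theorem IsMaxClique.ne_and_not_adj_simplicial_of_notMem [DecidableEq V] (hD : IsMaxClique G D)
    (hs : s ∈ SimpSet G D) (hv : v ∉ D) : v ≠ s ∧ ¬ G.Adj v s :=
  ⟨fun h => hv (h ▸ hs.1), fun h => hv (hD.mem_of_adj_simplicial hs h.symm)⟩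

theorem IsMaxClique.eq_of_simplicial_mem [DecidableEq V] (hD : IsMaxClique G D)
    (hE : IsMaxClique G E) (hs : s ∈ SimpSet G D) (hsE : s ∈ E) : E = D := by
  refine hE.2 D hD.1 fun w hw => ?_
  by_cases hws : w = s
  · exact hws ▸ hs.1
  · exact hD.mem_of_adj_simplicial hs (hE.1 (Finset.mem_coe.mpr hsE) (Finset.mem_coe.mpr hw)
      (Ne.symm hws))

end SimplicialVertices

theorem statement16_general {V : Type*} [DecidableEq V] (G : SimpleGraph V)
    (D D' D'' : Finset V) (hne : D ≠ D')
    (hD : IsBoundaryClique G D) (hD' : IsBoundaryClique G D')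
    (hD'' : IsMaxClique G D'') (hns : ¬ D'' ⊆ D ∪ D') :
    (∀ u ∈ (↑D'' : Set V) \ (↑D ∪ ↑D'), ∀ s ∈ SimpSet G D, ∀ s' ∈ SimpSet G D',
      u ≠ s ∧ u ≠ s' ∧ s ≠ s' ∧ ¬ G.Adj u s ∧ ¬ G.Adj u s' ∧ ¬ G.Adj s s') ∧
    Nat.card
      (G.induce (((↑D'' : Set V) \ (↑D ∪ ↑D') ∪ SimpSet G D) ∪ SimpSet G D')).ConnectedComponent
        = 3 := by
  obtain ⟨hDmax, hDsimp, -⟩ := hD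
  obtain ⟨hD'max, hD'simp, -⟩ := hD'
  set A := (↑D'' : Set V) \ (↑D ∪ ↑D')
  have hAB : ∀ u ∈ A, ∀ s ∈ SimpSet G D, u ≠ s ∧ ¬ G.Adj u s := fun u hu s hs =>
    hDmax.ne_and_not_adj_simplicial_of_notMem hs fun h => hu.2 (Or.inl h)
  have hAC : ∀ u ∈ A, ∀ s' ∈ SimpSet G D', u ≠ s' ∧ ¬ G.Adj u s' := fun u hu s' hs' =>
    hD'max.ne_and_not_adj_simplicial_of_notMem hs' fun h => hu.2 (Or.inr h)
  have hBC : ∀ s ∈ SimpSet G D, ∀ s' ∈ SimpSet G D', s ≠ s' ∧ ¬ G.Adj s s' := fun s hs s' hs' =>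
    hD'max.ne_and_not_adj_simplicial_of_notMem hs' fun h =>
      hne (hDmax.eq_of_simplicial_mem hD'max hs h).symm
  refine ⟨fun u hu s hs s' hs' => ⟨(hAB u hu s hs).1, (hAC u hu s' hs').1, (hBC s hs s' hs').1,
    (hAB u hu s hs).2, (hAC u hu s' hs').2, (hBC s hs s' hs').2⟩, ?_⟩
  obtain ⟨u, huD'', hu⟩ := Finset.not_subset.mp hns
  have hA₀ : A.Nonempty := ⟨u, huD'', by simpa using hu⟩
  exact G.card_connectedComponent_induce_union_union_cliques (hD''.1.subset Set.sdiff_subset)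
    (hDmax.1.subset fun x hx => hx.1) (hD'max.1.subset fun x hx => hx.1) hA₀ hDsimp hD'simp
    hAB hAC hBC

/-- if `D ≠ D'` are boundary cliques and `D''` is a maximal clique not
contained in `D ∪ D'`, then any `u ∈ D'' ∖ (D ∪ D')`, `s ∈ Simp(D)`, `s' ∈ Simp(D')` are
distinct and pairwise non-adjacent, and the induced subgraph on
`(D'' ∖ (D ∪ D')) ∪ Simp(D) ∪ Simp(D')` has exactly three connected components. -/
theorem statement16 {V : Type*} [Fintype V] [DecidableEq V] (G : SimpleGraph V)
    (D D' D'' : Finset V) (hne : D ≠ D')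
    (hD : IsBoundaryClique G D) (hD' : IsBoundaryClique G D')
    (hD'' : IsMaxClique G D'') (hns : ¬ D'' ⊆ D ∪ D') :
    (∀ u ∈ (↑D'' : Set V) \ (↑D ∪ ↑D'), ∀ s ∈ SimpSet G D, ∀ s' ∈ SimpSet G D',
      u ≠ s ∧ u ≠ s' ∧ s ≠ s' ∧ ¬ G.Adj u s ∧ ¬ G.Adj u s' ∧ ¬ G.Adj s s') ∧
    Nat.card
      (G.induce (((↑D'' : Set V) \ (↑D ∪ ↑D') ∪ SimpSet G D) ∪ SimpSet G D')).ConnectedComponent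
        = 3 :=
  statement16_general G D D' D'' hne hD hD' hD'' hns
end
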